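/- arXiv:2212.14311 — 4 statements merged into one kernel-verified Lean document; each statement's English description precedes it below -/
import Mathlib

section
/- Let d ≥ 1, p ≥ 2 be a real number, and let ν be a σ-finite Borel measure on ℝ^d with ν₂ := ∫_{0 < ‖z‖ < 1} ‖z‖² ν(dz) < ∞. Then there exists a constant C > 0, depending only on p and ν₂, such that for every y ∈ ℝ^d, ∫_{0 < ‖z‖ < 1} (‖y + z‖^p − ‖y‖^p − p‖y‖^{p−2}⟨y, z⟩) ν(dz) ≤ C(1 + ‖y‖^p), where the integrand is nonnegative by convexity of x ↦ ‖x‖^p and the term ‖y‖^{p−2}⟨y, z⟩ is interpreted as 0 when y = 0. -/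
open Real MeasureTheory
open scoped RealInnerProductSpace ENNReal

section Aux

lemma tangent_at (q : ℝ) (hq : 1 ≤ q) {u : ℝ} (hu : 0 < u) :
    u ^ q ≤ 1 + q * u ^ (q - 1) * (u - 1) := by
  have hx : (-1:ℝ) ≤ (1 - u) / u := by
    rw [le_div_iff₀ hu]; nlinarith
  have hb := one_add_mul_self_le_rpow_one_add hx hq
  have h1 : (1 : ℝ) + (1 - u) / u = 1 / u := by field_simp; ring
  rw [h1, one_div, Real.inv_rpow hu.le] at hb
  have hpos : 0 < u ^ q := Real.rpow_pos_of_pos hu q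
  have hw : u ^ (q - 1) * u = u ^ q := by
    rw [Real.rpow_sub hu, Real.rpow_one]; field_simp
  have key : u ^ q * (1 + q * ((1 - u) / u)) ≤ 1 := by
    have := mul_le_mul_of_nonneg_left hb hpos.le
    rwa [mul_inv_cancel₀ (ne_of_gt hpos)] at this
  have expand : u ^ q * (1 + q * ((1 - u) / u)) = u ^ q + q * u ^ (q - 1) * (1 - u) := by
    rw [← hw]; field_simp
  rw [expand] at key
  linarith

-- Bernoulli lower tangent at 1: 1 + q (u - 1) ≤ u ^ q  for u ≥ 0, q ≥ 1
lemma tangent_one (q : ℝ) (hq : 1 ≤ q) {u : ℝ} (hu : 0 ≤ u) :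
    1 + q * (u - 1) ≤ u ^ q := by
  have hx : (-1:ℝ) ≤ u - 1 := by linarith
  have := one_add_mul_self_le_rpow_one_add hx hq
  simpa using this

lemma oneD (q : ℝ) (hq : 1 ≤ q) {u : ℝ} (hu0 : 0 ≤ u) (hu9 : u ≤ 9/4) :
    u ^ q ≤ 1 + q*(u-1) + (2*q + q*(q*(9/4:ℝ)^q + q + 1))*(u-1)^2 := by
  set A : ℝ := (9/4:ℝ)^q with hA
  have hA1 : (1:ℝ) ≤ A := Real.one_le_rpow (by norm_num) (by linarith)
  set L : ℝ := q*A + q + 1 with hL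
  have hL1 : (1:ℝ) ≤ L := by nlinarith
  rcases le_or_gt u (1/2) with hcase | hcase
  · -- small u : use u^q ≤ u
    have huq : u ^ q ≤ u := by
      rcases eq_or_lt_of_le hu0 with h0 | h0
      · rw [← h0, Real.zero_rpow (by linarith : q ≠ 0)]
      · have := Real.rpow_le_rpow_of_exponent_ge h0 (by linarith : u ≤ 1) hq
        rwa [Real.rpow_one] at this
    have h12 : (1/2:ℝ) ≤ 1 - u := by linarith
    have hqL : (0:ℝ) ≤ q*L*(u-1)^2 := by positivity
    have ht : (1-u) ≤ 2*(1-u)^2 := by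
      nlinarith [mul_nonneg (by linarith : (0:ℝ) ≤ 1-u) (by linarith : (0:ℝ) ≤ 2*(1-u)-1)]
    have h2q : q*(1-u) ≤ 2*q*(u-1)^2 := by
      have := mul_le_mul_of_nonneg_left ht (by linarith : (0:ℝ) ≤ q)
      nlinarith
    nlinarith [huq]
  · -- u > 1/2
    have hu' : 0 < u := by linarith
    have hD := tangent_at q hq hu'
    have hE : (u-1)*(u^(q-1)-1) ≤ L*(u-1)^2 := by
      rcases le_or_gt 1 u with h1 | h1
      · -- u ≥ 1 : show u^(q-1) - 1 ≤ L*(u-1)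
        have hstep : u^(q-1) - 1 ≤ L*(u-1) := by
          rcases le_or_gt 2 q with h2 | h2
          · have hr : 1 ≤ q - 1 := by linarith
            have ht := tangent_at (q-1) hr hu'
            have hub : u^(q-1-1) ≤ A := by
              calc u^(q-1-1) ≤ (9/4:ℝ)^(q-1-1) :=
                    Real.rpow_le_rpow hu0 hu9 (by linarith)
                _ ≤ A := Real.rpow_le_rpow_of_exponent_le (by norm_num) (by linarith)
            nlinarith [mul_nonneg (by linarith : (0:ℝ) ≤ q-1) (by linarith : (0:ℝ) ≤ u-1)]
          · have : u^(q-1) ≤ u := by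
              have := Real.rpow_le_rpow_of_exponent_le h1 (by linarith : q-1 ≤ 1)
              rwa [Real.rpow_one] at this
            nlinarith
        nlinarith [sub_nonneg.2 h1]
      · -- u < 1 : show 1 - u^(q-1) ≤ L*(1-u)
        have hq1 : u^(q-1) ≤ 1 := Real.rpow_le_one hu0 h1.le (by linarith)
        have hstep : 1 - u^(q-1) ≤ L*(1-u) := by
          rcases le_or_gt 2 q with h2 | h2
          · have := tangent_one (q-1) (by linarith) hu0
            nlinarith
          · have : u ≤ u^(q-1) := by
              have := Real.rpow_le_rpow_of_exponent_ge hu' h1.le (by linarith : q-1 ≤ 1)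
              rwa [Real.rpow_one] at this
            nlinarith
        nlinarith [sub_nonneg.2 h1.le]
    have hq0 : (0:ℝ) ≤ q := by linarith
    calc u ^ q ≤ 1 + q * u ^ (q - 1) * (u - 1) := hD
      _ = 1 + q*(u-1) + q*((u-1)*(u^(q-1)-1)) := by ring
      _ ≤ 1 + q*(u-1) + q*(L*(u-1)^2) := by nlinarith [mul_le_mul_of_nonneg_left hE hq0]
      _ ≤ 1 + q*(u-1) + (2*q + q*L)*(u-1)^2 := by nlinarith [sq_nonneg (u-1)]

open MeasureTheory
open scoped RealInnerProductSpace

noncomputable def Kq (q : ℝ) : ℝ := 2*q + q*(q*(9/4:ℝ)^q + q + 1)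

lemma Kq_pos {q : ℝ} (hq : 1 ≤ q) : 0 < Kq q := by
  have hA1 : (1:ℝ) ≤ (9/4:ℝ)^q := Real.one_le_rpow (by norm_num) (by linarith)
  have hq0 : (0:ℝ) ≤ q := by linarith
  have h1 : (0:ℝ) ≤ q*(9/4:ℝ)^q := mul_nonneg hq0 (by linarith)
  have h2 : (0:ℝ) ≤ q*(q*(9/4:ℝ)^q + q + 1) := mul_nonneg hq0 (by linarith)
  unfold Kq; nlinarith

noncomputable def C₀ (p : ℝ) : ℝ := 3^p + p*2^p + p + 7*Kq (p/2)

lemma C₀_pos {p : ℝ} (hp : 2 ≤ p) : 0 < C₀ p := by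
  have := Kq_pos (q := p/2) (by linarith)
  have h3 : (0:ℝ) < (3:ℝ)^p := Real.rpow_pos_of_pos (by norm_num) p
  have h2 : (0:ℝ) < (2:ℝ)^p := Real.rpow_pos_of_pos (by norm_num) p
  unfold C₀; nlinarith

set_option maxHeartbeats 1600000 in
lemma pointwise_bound (p : ℝ) (hp : 2 ≤ p) {d : ℕ} (y z : EuclideanSpace ℝ (Fin d))
    (hz0 : 0 < ‖z‖) (hz1 : ‖z‖ < 1) :
    ‖y + z‖ ^ p - ‖y‖ ^ p - p * ‖y‖ ^ (p - 2) * ⟪y, z⟫ ≤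
      C₀ p * (1 + ‖y‖ ^ p) * ‖z‖ ^ (2:ℝ) := by
  set a := ‖y‖ with ha
  set r := ‖z‖ with hr
  set w := ‖y + z‖ with hw
  set ip := ⟪y, z⟫ with hip
  have ha0 : 0 ≤ a := norm_nonneg _
  have hw0 : 0 ≤ w := norm_nonneg _
  have hiple : |ip| ≤ a * r := abs_real_inner_le_norm y z
  have htri : w ≤ a + r := norm_add_le y z
  have hsq : w^2 = a^2 + 2*ip + r^2 := by
    rw [hw, ha, hr, hip]
    exact norm_add_sq_real y z
  clear_value a r w ip
  clear ha hr hw hip y z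
  have hr2 : r ^ (2:ℝ) = r^2 := Real.rpow_two r
  have hKpos := Kq_pos (q := p/2) (by linarith)
  have hap_nonneg : (0:ℝ) ≤ a ^ p := Real.rpow_nonneg ha0 p
  rcases le_or_gt a (2*r) with hcase | hcase
  · -- Case A : ‖y‖ ≤ 2‖z‖
    have hw3 : w ≤ 3*r := by linarith
    have hwp : w^p ≤ 3^p * r^(2:ℝ) := by
      calc w^p ≤ (3*r)^p := Real.rpow_le_rpow hw0 hw3 (by linarith)
        _ = 3^p * r^p := Real.mul_rpow (by norm_num) hz0.le
        _ ≤ 3^p * r^(2:ℝ) := by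
            have := Real.rpow_le_rpow_of_exponent_ge hz0 hz1.le hp
            have h3p : (0:ℝ) ≤ (3:ℝ)^p := Real.rpow_nonneg (by norm_num) p
            exact mul_le_mul_of_nonneg_left this h3p
    have hX : (0:ℝ) ≤ a ^ (p-2) := Real.rpow_nonneg ha0 _
    have h1 : -(p * a^(p-2) * ip) ≤ p * a^(p-2) * (a*r) := by
      have h' : -ip ≤ a*r := by
        have := neg_abs_le ip; linarith [hiple]
      have : p * a^(p-2) * -ip ≤ p * a^(p-2) * (a*r) :=
        mul_le_mul_of_nonneg_left h' (by positivity)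
      linarith
    have h2 : a^(p-2) * (a*r) ≤ 2^p * r^(2:ℝ) := by
      have hm : a^(p-2) ≤ (2*r)^(p-2) :=
        Real.rpow_le_rpow ha0 hcase (by linarith)
      have hmm : (2*r)^(p-2) = 2^(p-2) * r^(p-2) := Real.mul_rpow (by norm_num) hz0.le
      have hr1 : r^(p-2) ≤ 1 := Real.rpow_le_one hz0.le hz1.le (by linarith)
      have h2e : (2:ℝ)^(p-2) * 2 ≤ 2^p := by
        have : (2:ℝ)^(p-2) * 2^(1:ℝ) = 2^(p-1) := by
          rw [← Real.rpow_add (by norm_num : (0:ℝ) < 2), show p-2+1 = p-1 by ring]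
        rw [Real.rpow_one] at this
        rw [this]
        exact Real.rpow_le_rpow_of_exponent_le (by norm_num) (by linarith)
      have h2p2 : (0:ℝ) ≤ (2:ℝ)^(p-2) := Real.rpow_nonneg (by norm_num) _
      have har : a*r ≤ 2*r*r := by nlinarith
      calc a^(p-2) * (a*r) ≤ (2*r)^(p-2) * (2*r*r) := by
            apply mul_le_mul hm har (by positivity) (by positivity)
        _ = (2^(p-2) * r^(p-2)) * (2*r*r) := by rw [hmm]
        _ ≤ (2^(p-2) * 1) * (2*r*r) := by
            apply mul_le_mul_of_nonneg_right _ (by positivity)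
            exact mul_le_mul_of_nonneg_left hr1 h2p2
        _ = (2^(p-2) * 2) * (r*r) := by ring
        _ ≤ 2^p * (r*r) := mul_le_mul_of_nonneg_right h2e (by positivity)
        _ = 2^p * r^(2:ℝ) := by rw [hr2]; ring
    have hCge : 3^p + p*2^p ≤ C₀ p * (1 + a^p) := by
      have h1' : (1:ℝ) ≤ 1 + a^p := by linarith
      have hC := C₀_pos hp
      have : C₀ p * 1 ≤ C₀ p * (1 + a^p) := mul_le_mul_of_nonneg_left h1' hC.le
      unfold C₀ at this ⊢
      nlinarith [hKpos]
    have hr2pos : (0:ℝ) ≤ r^(2:ℝ) := Real.rpow_nonneg hz0.le _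
    have hp2p : p * (a^(p-2) * (a*r)) ≤ p * (2^p * r^(2:ℝ)) :=
      mul_le_mul_of_nonneg_left h2 (by linarith)
    calc w ^ p - a ^ p - p * a ^ (p - 2) * ip
        ≤ 3^p * r^(2:ℝ) + p * 2^p * r^(2:ℝ) := by nlinarith [hwp, h1, hp2p, hap_nonneg]
      _ = (3^p + p*2^p) * r^(2:ℝ) := by ring
      _ ≤ C₀ p * (1 + a^p) * r^(2:ℝ) := mul_le_mul_of_nonneg_right hCge hr2pos
  · -- Case B : 2‖z‖ < ‖y‖
    have ha' : 0 < a := by linarith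
    have hq : (1:ℝ) ≤ p/2 := by linarith
    set q : ℝ := p/2 with hqdef
    set K : ℝ := Kq q with hKdef
    set u : ℝ := w^2 / a^2 with hudef
    clear_value q K u
    have hu0 : 0 ≤ u := by rw [hudef]; positivity
    have hu9 : u ≤ 9/4 := by
      have hwa : w ≤ (3/2)*a := by linarith
      rw [hudef, div_le_iff₀ (by positivity)]
      nlinarith
    have hbig := oneD q hq hu0 hu9
    -- rewrite oneD's constant as K
    have hbig' : u ^ q ≤ 1 + q*(u-1) + K*(u-1)^2 := by
      rw [hKdef]; unfold Kq; exact hbig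
    have hap : 0 < a^p := Real.rpow_pos_of_pos ha' p
    -- a^p * u^q = w^p
    have hupow : a^p * u^q = w^p := by
      have hwa0 : (0:ℝ) ≤ w/a := div_nonneg hw0 ha0
      have h1 : u = (w/a)^(2:ℝ) := by rw [Real.rpow_two, hudef, div_pow]
      have h2 : u ^ q = (w/a)^p := by
        rw [h1, ← Real.rpow_mul hwa0, show (2:ℝ)*q = p by rw [hqdef]; ring]
      rw [h2, Real.div_rpow hw0 ha0, mul_comm, div_mul_cancel₀ _ (ne_of_gt hap)]
    have ha2 : a^(2:ℝ) = a^2 := Real.rpow_two a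
    have ha4 : a^(4:ℝ) = a^4 := by
      rw [← Real.rpow_natCast a 4]; norm_num
    have hap2 : a^(p-2) * a^2 = a^p := by
      rw [← ha2, ← Real.rpow_add ha', show p-2+2 = p by ring]
    have hap4 : a^(p-4) * a^2 = a^(p-2) := by
      rw [← ha2, ← Real.rpow_add ha', show p-4+2 = p-2 by ring]
    have hap4' : a^(p-4) * a^4 = a^p := by
      rw [← ha4, ← Real.rpow_add ha', show p-4+4 = p by ring]
    have ha2ne : (a^2:ℝ) ≠ 0 := (pow_pos ha' 2).ne'
    have hd : a^2 * (u - 1) = 2*ip + r^2 := by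
      have h' : a^2 * (u-1) = u * a^2 - a^2 := by ring
      rw [h', hudef, div_mul_cancel₀ _ ha2ne]
      linarith [hsq]
    have hu1 : a^p * (u - 1) = a^(p-2) * (2*ip + r^2) := by
      calc a^p * (u-1) = a^(p-2) * (a^2*(u-1)) := by rw [← hap2]; ring
        _ = a^(p-2) * (2*ip + r^2) := by rw [hd]
    have hu2 : a^p * (u - 1)^2 = a^(p-4) * (2*ip + r^2)^2 := by
      calc a^p * (u-1)^2 = a^(p-4) * (a^2*(u-1))^2 := by rw [← hap4']; ring
        _ = a^(p-4) * (2*ip + r^2)^2 := by rw [hd]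
    have quad : (2*ip + r^2)^2 ≤ (25/4) * (a^2 * r^2) := by
      have hipa : ip ≤ a*r := le_trans (le_abs_self ip) hiple
      have hipb : -(a*r) ≤ ip := by linarith [neg_abs_le ip, hiple]
      have hrr : r*r ≤ (a/2)*r := mul_le_mul_of_nonneg_right (by linarith) hz0.le
      have hsqr : r^2 = r*r := sq r
      have f1 : 0 ≤ (5/2)*(a*r) - (2*ip + r^2) := by linarith
      have f2 : 0 ≤ (5/2)*(a*r) + (2*ip + r^2) := by
        linarith [mul_nonneg ha0 hz0.le, mul_nonneg hz0.le hz0.le]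
      have hm := mul_nonneg f1 f2
      have hexp : ((5/2)*(a*r) - (2*ip + r^2)) * ((5/2)*(a*r) + (2*ip + r^2))
          = (25/4)*(a^2*r^2) - (2*ip + r^2)^2 := by ring
      rw [hexp] at hm
      linarith
    have hpm4 : (0:ℝ) ≤ a^(p-4) := Real.rpow_nonneg ha0 _
    have bound2 : a^(p-4) * (2*ip + r^2)^2 ≤ (25/4) * (a^(p-2) * r^2) := by
      calc a^(p-4) * (2*ip + r^2)^2 ≤ a^(p-4) * ((25/4) * (a^2 * r^2)) :=
            mul_le_mul_of_nonneg_left quad hpm4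
        _ = (25/4) * ((a^(p-4) * a^2) * r^2) := by ring
        _ = (25/4) * (a^(p-2) * r^2) := by rw [hap4]
    -- multiply oneD by a^p
    have main := mul_le_mul_of_nonneg_left hbig' hap.le
    rw [hupow] at main
    have main2 : w^p ≤ a^p + q * (a^(p-2) * (2*ip + r^2)) + K * (a^(p-4) * (2*ip + r^2)^2) := by
      have : a^p * (1 + q*(u-1) + K*(u-1)^2)
          = a^p + q * (a^p * (u-1)) + K * (a^p * (u-1)^2) := by ring
      rw [this, hu1, hu2] at main
      exact main
    have hap2le : a^(p-2) ≤ 1 + a^p := by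
      rcases le_or_gt a 1 with h1 | h1
      · have := Real.rpow_le_one ha0 h1 (by linarith : (0:ℝ) ≤ p-2)
        linarith
      · have := Real.rpow_le_rpow_of_exponent_le h1.le (by linarith : p-2 ≤ p)
        linarith
    have hx2 : (0:ℝ) ≤ a^(p-2) := Real.rpow_nonneg ha0 _
    have key : w^p - a^p - p * a^(p-2) * ip ≤ (q + (25/4)*K) * (a^(p-2) * r^2) := by
      have hKmul := mul_le_mul_of_nonneg_left bound2 hKpos.le
      have hexp : q * (a^(p-2) * (2*ip + r^2)) = p * a^(p-2) * ip + q * (a^(p-2) * r^2) := by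
        rw [hqdef]; ring
      have hgoal : (q + (25/4)*K) * (a^(p-2) * r^2)
          = q * (a^(p-2) * r^2) + K * ((25/4) * (a^(p-2) * r^2)) := by ring
      linarith [main2, hKmul, hexp, hgoal.le, hgoal.ge]
    have hfin : (q + (25/4)*K) * (a^(p-2) * r^2) ≤ C₀ p * (1 + a^p) * r^2 := by
      have h1 : a^(p-2) * r^2 ≤ (1 + a^p) * r^2 :=
        mul_le_mul_of_nonneg_right hap2le (by positivity)
      have hqK : 0 ≤ q + (25/4)*K := by linarith
      have h2 : (q + (25/4)*K) * (a^(p-2) * r^2) ≤ (q + (25/4)*K) * ((1 + a^p) * r^2) :=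
        mul_le_mul_of_nonneg_left h1 hqK
      have h3 : q + (25/4)*K ≤ C₀ p := by
        have h3p : (0:ℝ) ≤ (3:ℝ)^p := Real.rpow_nonneg (by norm_num) p
        have h2p : (0:ℝ) ≤ (2:ℝ)^p := Real.rpow_nonneg (by norm_num) p
        unfold C₀
        rw [hqdef] at hKdef
        rw [← hKdef]
        have hp2 : (0:ℝ) ≤ p * 2^p := mul_nonneg (by linarith) h2p
        linarith [hKpos]
      have h4 : (0:ℝ) ≤ (1 + a^p) * r^2 := by positivity
      calc (q + (25/4)*K) * (a^(p-2) * r^2) ≤ (q + (25/4)*K) * ((1 + a^p) * r^2) := h2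
        _ ≤ C₀ p * ((1 + a^p) * r^2) := mul_le_mul_of_nonneg_right h3 h4
        _ = C₀ p * (1 + a^p) * r^2 := by ring
    rw [hr2]
    linarith [key, hfin]


end Aux

/-- Estimate of the small-jump compensator term: if `ν` is a σ-finite Borel measure with
`∫_{0<‖z‖<1} ‖z‖² ν(dz) ≤ B`, then there is `C > 0`, depending only on `p` and the bound `B`
on `ν₂`, with `∫_{0<‖z‖<1} (‖y+z‖^p − ‖y‖^p − p‖y‖^{p−2}⟨y,z⟩) ν(dz) ≤ C(1 + ‖y‖^p)` for
all `y`.  The (nonnegative) integrals are expressed as Lebesgue integrals via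
`ENNReal.ofReal`, which in particular encodes their finiteness. -/
theorem small_jump_compensator_estimate (p : ℝ) (hp : 2 ≤ p) (B : ℝ) (hB : 0 ≤ B) :
    ∃ C : ℝ, 0 < C ∧
      ∀ (d : ℕ), 1 ≤ d →
      ∀ ν : Measure (EuclideanSpace ℝ (Fin d)), SigmaFinite ν →
      (∫⁻ z in {z : EuclideanSpace ℝ (Fin d) | 0 < ‖z‖ ∧ ‖z‖ < 1},
          ENNReal.ofReal (‖z‖ ^ (2:ℝ)) ∂ν) ≤ ENNReal.ofReal B →
      ∀ y : EuclideanSpace ℝ (Fin d),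
        (∫⁻ z in {z : EuclideanSpace ℝ (Fin d) | 0 < ‖z‖ ∧ ‖z‖ < 1},
            ENNReal.ofReal (‖y + z‖ ^ p - ‖y‖ ^ p - p * ‖y‖ ^ (p - 2) * ⟪y, z⟫) ∂ν)
          ≤ ENNReal.ofReal (C * (1 + ‖y‖ ^ p)) := by
  have hC0 := C₀_pos hp
  have hCB : 0 ≤ C₀ p * B := mul_nonneg hC0.le hB
  refine ⟨C₀ p * B + 1, by linarith, ?_⟩
  intro d _ ν _ hν y
  have hyp0 : (0:ℝ) ≤ ‖y‖ ^ p := Real.rpow_nonneg (norm_nonneg y) p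
  have hc0 : (0:ℝ) ≤ C₀ p * (1 + ‖y‖ ^ p) := mul_nonneg hC0.le (by linarith)
  have hSm : MeasurableSet {z : EuclideanSpace ℝ (Fin d) | 0 < ‖z‖ ∧ ‖z‖ < 1} := by
    have h1 : MeasurableSet {z : EuclideanSpace ℝ (Fin d) | 0 < ‖z‖} :=
      measurableSet_lt measurable_const measurable_norm
    have h2 : MeasurableSet {z : EuclideanSpace ℝ (Fin d) | ‖z‖ < 1} :=
      measurableSet_lt measurable_norm measurable_const
    exact h1.inter h2
  calc (∫⁻ z in {z : EuclideanSpace ℝ (Fin d) | 0 < ‖z‖ ∧ ‖z‖ < 1},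
          ENNReal.ofReal (‖y + z‖ ^ p - ‖y‖ ^ p - p * ‖y‖ ^ (p - 2) * ⟪y, z⟫) ∂ν)
      ≤ ∫⁻ z in {z : EuclideanSpace ℝ (Fin d) | 0 < ‖z‖ ∧ ‖z‖ < 1},
          ENNReal.ofReal (C₀ p * (1 + ‖y‖ ^ p)) * ENNReal.ofReal (‖z‖ ^ (2:ℝ)) ∂ν := by
        apply setLIntegral_mono' hSm
        intro z hz
        rw [← ENNReal.ofReal_mul hc0]
        exact ENNReal.ofReal_le_ofReal
          (le_of_le_of_eq (pointwise_bound p hp y z hz.1 hz.2) (by ring))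
    _ = ENNReal.ofReal (C₀ p * (1 + ‖y‖ ^ p)) *
          ∫⁻ z in {z : EuclideanSpace ℝ (Fin d) | 0 < ‖z‖ ∧ ‖z‖ < 1},
            ENNReal.ofReal (‖z‖ ^ (2:ℝ)) ∂ν :=
        lintegral_const_mul' _ _ ENNReal.ofReal_ne_top
    _ ≤ ENNReal.ofReal (C₀ p * (1 + ‖y‖ ^ p)) * ENNReal.ofReal B :=
        mul_le_mul_right hν _
    _ = ENNReal.ofReal (C₀ p * (1 + ‖y‖ ^ p) * B) := (ENNReal.ofReal_mul hc0).symm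
    _ ≤ ENNReal.ofReal ((C₀ p * B + 1) * (1 + ‖y‖ ^ p)) := by
        apply ENNReal.ofReal_le_ofReal
        nlinarith
end

section
/- Let (Ω, F, P) be a probability space, d, m ≥ 1, Δt ∈ (0,1) and γ₀ ∈ [1,2]. Let f : ℝ^d → ℝ^d satisfy ⟨x, f(x)⟩ ≤ M₁‖x‖² + m₁ for all x ∈ ℝ^d with M₁ < 0, m₁ ≥ 0, and let g : ℝ^d → ℝ^{d×m} be measurable with ‖g(x)‖² ≤ M₂‖x‖² + m₂ for all x ∈ ℝ^d, where M₂ > 0, m₂ ≥ 0 and M₂ + 2M₁ < 0. Let X_i : Ω → ℝ^d (i ≥ 0), ξ_{i+1} : Ω → ℝ^m and η_{i+1} : Ω → ℝ^d (i ≥ 0) be random variables such that for each i ≥ 0: (i) X_{i+1} = X_i + f(X_{i+1})Δt + g(X_i)ξ_{i+1} + η_{i+1} almost surely; (ii) X_i, ξ_{i+1}, η_{i+1} are mutually independent; (iii) E[ξ_{i+1}] = 0 and E[ξ_{i+1,a} ξ_{i+1,b}] = Δt·δ_{ab} for all coordinates a, b; (iv) E[η_{i+1}] = 0 and E‖η_{i+1}‖²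 ≤ Δt^{2/γ₀}; (v) E‖X_i‖² < ∞. Set Q₁ = (1 + M₂Δt)/(1 − 2M₁Δt) and Q₂ = (2m₁ + m₂ + 1)Δt/(1 − 2M₁Δt). Then Q₁ < 1 and for every i ≥ 1, E‖X_i‖² ≤ Q₁^i E‖X_0‖² + Q₂(1 − Q₁^i)/(1 − Q₁). -/
open Real MeasureTheory ProbabilityTheory
open scoped RealInnerProductSpace

private lemma em_norm_sq_eq {n : ℕ} (v : EuclideanSpace ℝ (Fin n)) :
    ‖v‖ ^ 2 = ∑ i, v i * v i := by
  rw [EuclideanSpace.norm_sq_eq]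
  simp [sq_abs, sq]

private lemma em_coord_abs_le {n : ℕ} (v : EuclideanSpace ℝ (Fin n)) (a : Fin n) :
    |v a| ≤ ‖v‖ := by
  have h := em_norm_sq_eq v
  have h1 : v a * v a ≤ ∑ i, v i * v i :=
    Finset.single_le_sum (f := fun i => v i * v i) (fun i _ => mul_self_nonneg (v i))
      (Finset.mem_univ a)
  nlinarith [norm_nonneg v, abs_nonneg (v a), sq_abs (v a), abs_mul_abs_self (v a)]

private lemma em_norm_add3_sq {E : Type*} [NormedAddCommGroup E] [InnerProductSpace ℝ E]
    (a b c : E) :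
    ‖a + b + c‖ ^ 2 = ‖a‖ ^ 2 + ‖b‖ ^ 2 + ‖c‖ ^ 2
      + 2 * ⟪a, b⟫ + 2 * ⟪a, c⟫ + 2 * ⟪b, c⟫ := by
  rw [norm_add_sq_real, norm_add_sq_real, inner_add_left]; ring

private lemma em_geo_rec (A B : ℝ) (hA0 : 0 ≤ A) (hA1 : A < 1) (u : ℕ → ℝ)
    (h : ∀ i, u (i + 1) ≤ A * u i + B) :
    ∀ i, u i ≤ A ^ i * u 0 + B * (1 - A ^ i) / (1 - A) := by
  have h1A : (0:ℝ) < 1 - A := by linarith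
  intro i
  induction i with
  | zero => simp
  | succ n ih =>
    have h2 : A * u n ≤ A * (A ^ n * u 0 + B * (1 - A ^ n) / (1 - A)) :=
      mul_le_mul_of_nonneg_left ih hA0
    have h3 : A * (A ^ n * u 0 + B * (1 - A ^ n) / (1 - A)) + B
        = A ^ (n + 1) * u 0 + B * (1 - A ^ (n + 1)) / (1 - A) := by
      field_simp
      ring
    linarith [h n, h2, h3.le, h3.ge]

set_option maxHeartbeats 1000000 in
/-- Lemma 4.1: uniform second-moment bound for the semi-implicit Euler–Maruyama method
`X_{i+1} = X_i + f(X_{i+1})Δt + g(X_i)ξ_{i+1} + η_{i+1}`.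
A `d × m` matrix is represented by its columns `g x : Fin m → ℝ^d`; its Frobenius norm
squared is `∑ j, ‖g x j‖²` and `g(X_i)ξ_{i+1} = ∑ j, ξ_{i+1,j} • g(X_i) j`.  Mutual
independence of `(X_i, ξ_{i+1}, η_{i+1})` is encoded as independence of `X_i` from the
pair `(ξ_{i+1}, η_{i+1})` together with independence of `ξ_{i+1}` from `η_{i+1}`. -/
theorem semi_implicit_EM_moment_bound
    (Ω : Type*) [MeasurableSpace Ω] (P : Measure Ω) [IsProbabilityMeasure P]
    (d m : ℕ) (hd : 1 ≤ d) (hm : 1 ≤ m)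
    (Δt γ₀ M₁ m₁ M₂ m₂ : ℝ)
    (hΔt : Δt ∈ Set.Ioo (0:ℝ) 1) (hγ₀ : γ₀ ∈ Set.Icc (1:ℝ) 2)
    (hM₁ : M₁ < 0) (hm₁ : 0 ≤ m₁) (hM₂ : 0 < M₂) (hm₂ : 0 ≤ m₂)
    (hM₁₂ : M₂ + 2 * M₁ < 0)
    (f : EuclideanSpace ℝ (Fin d) → EuclideanSpace ℝ (Fin d))
    (hf : ∀ x : EuclideanSpace ℝ (Fin d), ⟪x, f x⟫ ≤ M₁ * ‖x‖ ^ 2 + m₁)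
    (g : EuclideanSpace ℝ (Fin d) → Fin m → EuclideanSpace ℝ (Fin d))
    (hgmeas : Measurable g)
    (hg : ∀ x : EuclideanSpace ℝ (Fin d), (∑ j, ‖g x j‖ ^ 2) ≤ M₂ * ‖x‖ ^ 2 + m₂)
    (X η : ℕ → Ω → EuclideanSpace ℝ (Fin d)) (ξ : ℕ → Ω → EuclideanSpace ℝ (Fin m))
    (hXmeas : ∀ i, Measurable (X i)) (hξmeas : ∀ i, Measurable (ξ i))
    (hηmeas : ∀ i, Measurable (η i))
    -- (i) the semi-implicit Euler–Maruyama recurrence, almost surely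
    (hrec : ∀ i : ℕ, ∀ᵐ ω ∂P,
      X (i + 1) ω = X i ω + Δt • f (X (i + 1) ω)
        + (∑ j, ξ (i + 1) ω j • g (X i ω) j) + η (i + 1) ω)
    -- (ii) mutual independence of `X_i`, `ξ_{i+1}`, `η_{i+1}`
    (hindep₁ : ∀ i : ℕ, IndepFun (X i) (fun ω => (ξ (i + 1) ω, η (i + 1) ω)) P)
    (hindep₂ : ∀ i : ℕ, IndepFun (ξ (i + 1)) (η (i + 1)) P)
    -- (iii) Brownian-increment moments
    (hξmean : ∀ i : ℕ, ∫ ω, ξ (i + 1) ω ∂P = 0)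
    (hξcov : ∀ i : ℕ, ∀ a b : Fin m,
      ∫ ω, ξ (i + 1) ω a * ξ (i + 1) ω b ∂P = if a = b then Δt else 0)
    -- (iv) Lévy-increment moments
    (hηmean : ∀ i : ℕ, ∫ ω, η (i + 1) ω ∂P = 0)
    (hη2int : ∀ i : ℕ, Integrable (fun ω => ‖η (i + 1) ω‖ ^ 2) P)
    (hη2 : ∀ i : ℕ, ∫ ω, ‖η (i + 1) ω‖ ^ 2 ∂P ≤ Δt ^ (2 / γ₀))
    -- (v) square integrability
    (hX2 : ∀ i : ℕ, Integrable (fun ω => ‖X i ω‖ ^ 2) P) :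
    (1 + M₂ * Δt) / (1 - 2 * M₁ * Δt) < 1 ∧
    ∀ i : ℕ, 1 ≤ i →
      ∫ ω, ‖X i ω‖ ^ 2 ∂P
        ≤ ((1 + M₂ * Δt) / (1 - 2 * M₁ * Δt)) ^ i * (∫ ω, ‖X 0 ω‖ ^ 2 ∂P)
          + ((2 * m₁ + m₂ + 1) * Δt / (1 - 2 * M₁ * Δt))
            * (1 - ((1 + M₂ * Δt) / (1 - 2 * M₁ * Δt)) ^ i)
            / (1 - (1 + M₂ * Δt) / (1 - 2 * M₁ * Δt)) := by
  obtain ⟨hΔt0, hΔt1⟩ := hΔt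
  have hden : (0:ℝ) < 1 - 2 * M₁ * Δt := by nlinarith
  have hnum : (0:ℝ) < 1 + M₂ * Δt := by nlinarith
  have hQ1lt : (1 + M₂ * Δt) / (1 - 2 * M₁ * Δt) < 1 := by
    rw [div_lt_one hden]; nlinarith
  have hQ10 : (0:ℝ) ≤ (1 + M₂ * Δt) / (1 - 2 * M₁ * Δt) := le_of_lt (div_pos hnum hden)
  refine ⟨hQ1lt, ?_⟩
  have step : ∀ i : ℕ, ∫ ω, ‖X (i + 1) ω‖ ^ 2 ∂P
      ≤ ((1 + M₂ * Δt) / (1 - 2 * M₁ * Δt)) * (∫ ω, ‖X i ω‖ ^ 2 ∂P)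
        + (2 * m₁ + m₂ + 1) * Δt / (1 - 2 * M₁ * Δt) := by
    intro i
    have hcov := hξcov i
    have hxm : Measurable (X i) := hXmeas i
    have hsm : Measurable (ξ (i + 1)) := hξmeas (i + 1)
    have hem : Measurable (η (i + 1)) := hηmeas (i + 1)
    have hx2 : Integrable (fun ω => ‖X i ω‖ ^ 2) P := hX2 i
    have hx'2 : Integrable (fun ω => ‖X (i + 1) ω‖ ^ 2) P := hX2 (i + 1)
    have he2 : Integrable (fun ω => ‖η (i + 1) ω‖ ^ 2) P := hη2int i
    -- coordinate measurability
    have ms : ∀ j : Fin m, Measurable fun ω => ξ (i + 1) ω j :=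
      fun j => (measurable_pi_apply j).comp ((WithLp.measurable_ofLp 2 _).comp hsm)
    have me : ∀ a : Fin d, Measurable fun ω => η (i + 1) ω a :=
      fun a => (measurable_pi_apply a).comp ((WithLp.measurable_ofLp 2 _).comp hem)
    have mxa : ∀ a : Fin d, Measurable fun ω => X i ω a :=
      fun a => (measurable_pi_apply a).comp ((WithLp.measurable_ofLp 2 _).comp hxm)
    have mgj : ∀ j : Fin m, Measurable fun ω => g (X i ω) j :=
      fun j => (measurable_pi_apply j).comp (hgmeas.comp hxm)
    have mgja : ∀ (j : Fin m) (a : Fin d), Measurable fun ω => g (X i ω) j a :=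
      fun j a => (measurable_pi_apply a).comp ((WithLp.measurable_ofLp 2 _).comp (mgj j))
    have mgjk : ∀ j k : Fin m, Measurable fun ω => ⟪g (X i ω) j, g (X i ω) k⟫ :=
      fun j k => (mgj j).inner (mgj k)
    have mxgj : ∀ j : Fin m, Measurable fun ω => ⟪X i ω, g (X i ω) j⟫ :=
      fun j => hxm.inner (mgj j)
    -- integrabilities
    have Dm : Integrable (fun ω => M₂ * ‖X i ω‖ ^ 2 + m₂) P :=
      (hx2.const_mul M₂).add (integrable_const m₂)
    have hsum_nonneg : ∀ ω, (0:ℝ) ≤ ∑ j, ‖g (X i ω) j‖ ^ 2 :=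
      fun ω => Finset.sum_nonneg fun j _ => sq_nonneg _
    have hgj_le : ∀ (ω) (j : Fin m), ‖g (X i ω) j‖ ^ 2 ≤ M₂ * ‖X i ω‖ ^ 2 + m₂ := fun ω j =>
      le_trans (Finset.single_le_sum (f := fun j => ‖g (X i ω) j‖ ^ 2)
        (fun j _ => sq_nonneg _) (Finset.mem_univ j)) (hg _)
    have hgsum : Integrable (fun ω => ∑ j, ‖g (X i ω) j‖ ^ 2) P := by
      refine Dm.mono' ?_ (ae_of_all _ fun ω => ?_)
      · exact (Finset.measurable_sum _ fun j _ => (mgj j).norm.pow_const 2).aestronglyMeasurable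
      · rw [Real.norm_eq_abs, abs_of_nonneg (hsum_nonneg ω)]; exact hg _
    have hgj2 : ∀ j, Integrable (fun ω => ‖g (X i ω) j‖ ^ 2) P := fun j => by
      refine Dm.mono' ((mgj j).norm.pow_const 2).aestronglyMeasurable (ae_of_all _ fun ω => ?_)
      rw [Real.norm_eq_abs, abs_of_nonneg (sq_nonneg _)]; exact hgj_le ω j
    have hgjk : ∀ j k, Integrable (fun ω => ⟪g (X i ω) j, g (X i ω) k⟫) P := fun j k => by
      refine Dm.mono' (mgjk j k).aestronglyMeasurable (ae_of_all _ fun ω => ?_)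
      rw [Real.norm_eq_abs]
      have h1 := hgj_le ω j; have h2 := hgj_le ω k
      have h3 := abs_real_inner_le_norm (g (X i ω) j) (g (X i ω) k)
      nlinarith [sq_nonneg (‖g (X i ω) j‖ - ‖g (X i ω) k‖), norm_nonneg (g (X i ω) j),
        norm_nonneg (g (X i ω) k)]
    have hxg : ∀ j, Integrable (fun ω => ⟪X i ω, g (X i ω) j⟫) P := fun j => by
      refine (hx2.add Dm).mono' (mxgj j).aestronglyMeasurable (ae_of_all _ fun ω => ?_)
      simp only [Pi.add_apply]
      rw [Real.norm_eq_abs]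
      have h1 := hgj_le ω j
      have h3 := abs_real_inner_le_norm (X i ω) (g (X i ω) j)
      nlinarith [sq_nonneg (‖X i ω‖ - ‖g (X i ω) j‖), norm_nonneg (X i ω),
        norm_nonneg (g (X i ω) j)]
    have hgja : ∀ j a, Integrable (fun ω => g (X i ω) j a) P := fun j a => by
      refine ((integrable_const (1:ℝ)).add Dm).mono' (mgja j a).aestronglyMeasurable
        (ae_of_all _ fun ω => ?_)
      simp only [Pi.add_apply]
      rw [Real.norm_eq_abs]
      have h1 := em_coord_abs_le (g (X i ω) j) a
      have h2 := hgj_le ω j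
      nlinarith [sq_nonneg (‖g (X i ω) j‖ - 1), norm_nonneg (g (X i ω) j)]
    have hxa : ∀ a, Integrable (fun ω => X i ω a) P := fun a => by
      refine ((integrable_const (1:ℝ)).add hx2).mono' (mxa a).aestronglyMeasurable
        (ae_of_all _ fun ω => ?_)
      simp only [Pi.add_apply]
      rw [Real.norm_eq_abs]
      have h1 := em_coord_abs_le (X i ω) a
      nlinarith [sq_nonneg (‖X i ω‖ - 1), norm_nonneg (X i ω)]
    have hs2 : ∀ j, Integrable (fun ω => ξ (i + 1) ω j * ξ (i + 1) ω j) P := fun j => by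
      by_contra hcon
      have h0 := integral_undef hcon
      have h1 := hcov j j
      rw [if_pos rfl, h0] at h1
      linarith
    have hsjk : ∀ j k, Integrable (fun ω => ξ (i + 1) ω j * ξ (i + 1) ω k) P := fun j k => by
      refine ((hs2 j).add (hs2 k)).mono' ((ms j).mul (ms k)).aestronglyMeasurable
        (ae_of_all _ fun ω => ?_)
      simp only [Pi.add_apply]
      rw [Real.norm_eq_abs, abs_mul]
      nlinarith [sq_nonneg (|ξ (i + 1) ω j| - |ξ (i + 1) ω k|),
        abs_mul_abs_self (ξ (i + 1) ω j), abs_mul_abs_self (ξ (i + 1) ω k),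
        abs_nonneg (ξ (i + 1) ω j), abs_nonneg (ξ (i + 1) ω k)]
    have hs1 : ∀ j, Integrable (fun ω => ξ (i + 1) ω j) P := fun j => by
      refine ((integrable_const (1:ℝ)).add (hs2 j)).mono' (ms j).aestronglyMeasurable
        (ae_of_all _ fun ω => ?_)
      simp only [Pi.add_apply]
      rw [Real.norm_eq_abs]
      nlinarith [abs_mul_abs_self (ξ (i + 1) ω j), sq_nonneg (|ξ (i + 1) ω j| - 1),
        abs_nonneg (ξ (i + 1) ω j)]
    have hsvec : Integrable (ξ (i + 1)) P := by
      have hdom : Integrable (fun ω => (1:ℝ) + ∑ j, ξ (i + 1) ω j * ξ (i + 1) ω j) P :=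
        (integrable_const (1:ℝ)).add (integrable_finset_sum _ fun j _ => hs2 j)
      refine hdom.mono' hsm.aestronglyMeasurable (ae_of_all _ fun ω => ?_)
      have h1 := em_norm_sq_eq (ξ (i + 1) ω)
      nlinarith [norm_nonneg (ξ (i + 1) ω), sq_nonneg (‖ξ (i + 1) ω‖ - 1)]
    have hevec : Integrable (η (i + 1)) P := by
      refine ((integrable_const (1:ℝ)).add he2).mono' hem.aestronglyMeasurable
        (ae_of_all _ fun ω => ?_)
      simp only [Pi.add_apply]
      nlinarith [norm_nonneg (η (i + 1) ω), sq_nonneg (‖η (i + 1) ω‖ - 1)]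
    have hea : ∀ a, Integrable (fun ω => η (i + 1) ω a) P := fun a => by
      refine hevec.norm.mono' (me a).aestronglyMeasurable (ae_of_all _ fun ω => ?_)
      rw [Real.norm_eq_abs]
      exact em_coord_abs_le _ _
    have Esa : ∀ j, ∫ ω, ξ (i + 1) ω j ∂P = 0 := fun j => by
      have h := (EuclideanSpace.proj (𝕜 := ℝ) j).integral_comp_comm hsvec
      rw [hξmean i, map_zero] at h
      exact h
    have Eea : ∀ a, ∫ ω, η (i + 1) ω a ∂P = 0 := fun a => by
      have h := (EuclideanSpace.proj (𝕜 := ℝ) a).integral_comp_comm hevec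
      rw [hηmean i, map_zero] at h
      exact h
    -- independence of composed functions
    have hI := hindep₁ i
    have indA : ∀ j k : Fin m, IndepFun (fun ω => ⟪g (X i ω) j, g (X i ω) k⟫)
        (fun ω => ξ (i + 1) ω j * ξ (i + 1) ω k) P := fun j k =>
      hI.comp (((measurable_pi_apply j).comp hgmeas).inner ((measurable_pi_apply k).comp hgmeas))
        (((measurable_pi_apply j).comp ((WithLp.measurable_ofLp 2 _).comp measurable_fst)).mul
          ((measurable_pi_apply k).comp ((WithLp.measurable_ofLp 2 _).comp measurable_fst)))
    have indB : ∀ j : Fin m, IndepFun (fun ω => ⟪X i ω, g (X i ω) j⟫)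
        (fun ω => ξ (i + 1) ω j) P := fun j =>
      hI.comp (measurable_id.inner ((measurable_pi_apply j).comp hgmeas))
        ((measurable_pi_apply j).comp ((WithLp.measurable_ofLp 2 _).comp measurable_fst))
    have indC : ∀ a : Fin d, IndepFun (fun ω => X i ω a) (fun ω => η (i + 1) ω a) P := fun a =>
      hI.comp ((measurable_pi_apply a).comp (WithLp.measurable_ofLp 2 _)) ((measurable_pi_apply a).comp ((WithLp.measurable_ofLp 2 _).comp measurable_snd))
    have indD : ∀ (j : Fin m) (a : Fin d), IndepFun (fun ω => g (X i ω) j a)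
        (fun ω => ξ (i + 1) ω j * η (i + 1) ω a) P := fun j a =>
      hI.comp ((measurable_pi_apply a).comp ((WithLp.measurable_ofLp 2 _).comp ((measurable_pi_apply j).comp hgmeas)))
        (((measurable_pi_apply j).comp ((WithLp.measurable_ofLp 2 _).comp measurable_fst)).mul
          ((measurable_pi_apply a).comp ((WithLp.measurable_ofLp 2 _).comp measurable_snd)))
    have indE : ∀ (j : Fin m) (a : Fin d),
        IndepFun (fun ω => ξ (i + 1) ω j) (fun ω => η (i + 1) ω a) P := fun j a =>
      (hindep₂ i).comp ((measurable_pi_apply j).comp (WithLp.measurable_ofLp 2 _)) ((measurable_pi_apply a).comp (WithLp.measurable_ofLp 2 _))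
    -- product integrabilities
    have hse : ∀ (j : Fin m) (a : Fin d),
        Integrable (fun ω => ξ (i + 1) ω j * η (i + 1) ω a) P :=
      fun j a => (indE j a).integrable_mul (hs1 j) (hea a)
    have iA : ∀ j k, Integrable
        (fun ω => ⟪g (X i ω) j, g (X i ω) k⟫ * (ξ (i + 1) ω j * ξ (i + 1) ω k)) P :=
      fun j k => (indA j k).integrable_mul (hgjk j k) (hsjk j k)
    have iB : ∀ j, Integrable (fun ω => ⟪X i ω, g (X i ω) j⟫ * ξ (i + 1) ω j) P :=
      fun j => (indB j).integrable_mul (hxg j) (hs1 j)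
    have iCa : ∀ a, Integrable (fun ω => X i ω a * η (i + 1) ω a) P :=
      fun a => (indC a).integrable_mul (hxa a) (hea a)
    have iD : ∀ j a, Integrable
        (fun ω => g (X i ω) j a * (ξ (i + 1) ω j * η (i + 1) ω a)) P :=
      fun j a => (indD j a).integrable_mul (hgja j a) (hse j a)
    -- pointwise algebraic identities
    have hGs_eq : ∀ ω, ‖∑ j, ξ (i + 1) ω j • g (X i ω) j‖ ^ 2
        = ∑ j, ∑ k, ⟪g (X i ω) j, g (X i ω) k⟫ * (ξ (i + 1) ω j * ξ (i + 1) ω k) := by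
      intro ω
      rw [← real_inner_self_eq_norm_sq, sum_inner]
      refine Finset.sum_congr rfl fun j _ => ?_
      rw [inner_sum]
      refine Finset.sum_congr rfl fun k _ => ?_
      rw [real_inner_smul_left, real_inner_smul_right]
      ring
    have hXGs_eq : ∀ ω, ⟪X i ω, ∑ j, ξ (i + 1) ω j • g (X i ω) j⟫
        = ∑ j, ⟪X i ω, g (X i ω) j⟫ * ξ (i + 1) ω j := by
      intro ω
      rw [inner_sum]
      exact Finset.sum_congr rfl fun j _ => by rw [real_inner_smul_right]; ring
    have hXe_eq : ∀ ω, ⟪X i ω, η (i + 1) ω⟫ = ∑ a, X i ω a * η (i + 1) ω a := by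
      intro ω
      simp [PiLp.inner_apply, RCLike.inner_apply, conj_trivial, mul_comm]
    have hGse_eq : ∀ ω, ⟪∑ j, ξ (i + 1) ω j • g (X i ω) j, η (i + 1) ω⟫
        = ∑ j, ∑ a, g (X i ω) j a * (ξ (i + 1) ω j * η (i + 1) ω a) := by
      intro ω
      rw [sum_inner]
      refine Finset.sum_congr rfl fun j _ => ?_
      rw [real_inner_smul_left,
        show ⟪g (X i ω) j, η (i + 1) ω⟫ = ∑ a, g (X i ω) j a * η (i + 1) ω a from by
          simp [PiLp.inner_apply, RCLike.inner_apply, conj_trivial, mul_comm],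
        Finset.mul_sum]
      exact Finset.sum_congr rfl fun a _ => by ring
    -- integrability of composite terms
    have iGs2 : Integrable (fun ω => ‖∑ j, ξ (i + 1) ω j • g (X i ω) j‖ ^ 2) P :=
      (integrable_finset_sum _ fun j _ => integrable_finset_sum _ fun k _ => iA j k).congr
        (ae_of_all _ fun ω => (hGs_eq ω).symm)
    have iC1 : Integrable (fun ω => ⟪X i ω, ∑ j, ξ (i + 1) ω j • g (X i ω) j⟫) P :=
      (integrable_finset_sum _ fun j _ => iB j).congr (ae_of_all _ fun ω => (hXGs_eq ω).symm)
    have iC2 : Integrable (fun ω => ⟪X i ω, η (i + 1) ω⟫) P :=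
      (integrable_finset_sum _ fun a _ => iCa a).congr (ae_of_all _ fun ω => (hXe_eq ω).symm)
    have iC3 : Integrable (fun ω => ⟪∑ j, ξ (i + 1) ω j • g (X i ω) j, η (i + 1) ω⟫) P :=
      (integrable_finset_sum _ fun j _ => integrable_finset_sum _ fun a _ => iD j a).congr
        (ae_of_all _ fun ω => (hGse_eq ω).symm)
    -- the second moment of the diffusion term
    have h2 : ∀ j k, ∫ ω, ⟪g (X i ω) j, g (X i ω) k⟫ * (ξ (i + 1) ω j * ξ (i + 1) ω k) ∂P
        = (∫ ω, ⟪g (X i ω) j, g (X i ω) k⟫ ∂P) * (if j = k then Δt else 0) := fun j k => by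
      have h := (indA j k).integral_fun_mul_eq_mul_integral (mgjk j k).aestronglyMeasurable
        ((ms j).mul (ms k)).aestronglyMeasurable
      rw [hcov j k] at h
      exact h
    have EGs2 : ∫ ω, ‖∑ j, ξ (i + 1) ω j • g (X i ω) j‖ ^ 2 ∂P
        = Δt * ∫ ω, (∑ j, ‖g (X i ω) j‖ ^ 2) ∂P := by
      calc ∫ ω, ‖∑ j, ξ (i + 1) ω j • g (X i ω) j‖ ^ 2 ∂P
          = ∫ ω, (∑ j, ∑ k, ⟪g (X i ω) j, g (X i ω) k⟫ * (ξ (i + 1) ω j * ξ (i + 1) ω k)) ∂P :=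
            integral_congr_ae (ae_of_all _ hGs_eq)
        _ = ∑ j, ∫ ω, (∑ k, ⟪g (X i ω) j, g (X i ω) k⟫ * (ξ (i + 1) ω j * ξ (i + 1) ω k)) ∂P :=
            integral_finset_sum _ fun j _ => integrable_finset_sum _ fun k _ => iA j k
        _ = ∑ j, ∑ k, ∫ ω, ⟪g (X i ω) j, g (X i ω) k⟫ * (ξ (i + 1) ω j * ξ (i + 1) ω k) ∂P :=
            Finset.sum_congr rfl fun j _ => integral_finset_sum _ fun k _ => iA j k
        _ = ∑ j, ∑ k, (∫ ω, ⟪g (X i ω) j, g (X i ω) k⟫ ∂P) * (if j = k then Δt else 0) :=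
            Finset.sum_congr rfl fun j _ => Finset.sum_congr rfl fun k _ => h2 j k
        _ = ∑ j, (∫ ω, ⟪g (X i ω) j, g (X i ω) j⟫ ∂P) * Δt := by
            refine Finset.sum_congr rfl fun j _ => ?_
            rw [Finset.sum_eq_single j]
            · simp
            · intro k _ hk
              simp [Ne.symm hk]
            · intro h
              exact absurd (Finset.mem_univ j) h
        _ = Δt * ∑ j, ∫ ω, ‖g (X i ω) j‖ ^ 2 ∂P := by
            rw [Finset.mul_sum]
            refine Finset.sum_congr rfl fun j _ => ?_
            rw [integral_congr_ae
              (ae_of_all _ fun ω => real_inner_self_eq_norm_sq (g (X i ω) j))]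
            ring
        _ = Δt * ∫ ω, (∑ j, ‖g (X i ω) j‖ ^ 2) ∂P := by
            rw [integral_finset_sum _ fun j _ => hgj2 j]
    -- vanishing of the three cross terms
    have EC1 : ∫ ω, ⟪X i ω, ∑ j, ξ (i + 1) ω j • g (X i ω) j⟫ ∂P = 0 := by
      calc ∫ ω, ⟪X i ω, ∑ j, ξ (i + 1) ω j • g (X i ω) j⟫ ∂P
          = ∫ ω, (∑ j, ⟪X i ω, g (X i ω) j⟫ * ξ (i + 1) ω j) ∂P :=
            integral_congr_ae (ae_of_all _ hXGs_eq)
        _ = ∑ j, ∫ ω, ⟪X i ω, g (X i ω) j⟫ * ξ (i + 1) ω j ∂P :=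
            integral_finset_sum _ fun j _ => iB j
        _ = 0 := by
            refine Finset.sum_eq_zero fun j _ => ?_
            have h := (indB j).integral_fun_mul_eq_mul_integral (mxgj j).aestronglyMeasurable
              (ms j).aestronglyMeasurable
            rw [Esa j, mul_zero] at h
            exact h
    have EC2 : ∫ ω, ⟪X i ω, η (i + 1) ω⟫ ∂P = 0 := by
      calc ∫ ω, ⟪X i ω, η (i + 1) ω⟫ ∂P
          = ∫ ω, (∑ a, X i ω a * η (i + 1) ω a) ∂P := integral_congr_ae (ae_of_all _ hXe_eq)
        _ = ∑ a, ∫ ω, X i ω a * η (i + 1) ω a ∂P := integral_finset_sum _ fun a _ => iCa a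
        _ = 0 := by
            refine Finset.sum_eq_zero fun a _ => ?_
            have h := (indC a).integral_fun_mul_eq_mul_integral (mxa a).aestronglyMeasurable
              (me a).aestronglyMeasurable
            rw [Eea a, mul_zero] at h
            exact h
    have EC3 : ∫ ω, ⟪∑ j, ξ (i + 1) ω j • g (X i ω) j, η (i + 1) ω⟫ ∂P = 0 := by
      calc ∫ ω, ⟪∑ j, ξ (i + 1) ω j • g (X i ω) j, η (i + 1) ω⟫ ∂P
          = ∫ ω, (∑ j, ∑ a, g (X i ω) j a * (ξ (i + 1) ω j * η (i + 1) ω a)) ∂P :=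
            integral_congr_ae (ae_of_all _ hGse_eq)
        _ = ∑ j, ∫ ω, (∑ a, g (X i ω) j a * (ξ (i + 1) ω j * η (i + 1) ω a)) ∂P :=
            integral_finset_sum _ fun j _ => integrable_finset_sum _ fun a _ => iD j a
        _ = ∑ j, ∑ a, ∫ ω, g (X i ω) j a * (ξ (i + 1) ω j * η (i + 1) ω a) ∂P :=
            Finset.sum_congr rfl fun j _ => integral_finset_sum _ fun a _ => iD j a
        _ = 0 := by
            refine Finset.sum_eq_zero fun j _ => Finset.sum_eq_zero fun a _ => ?_
            have h0 : ∫ ω, ξ (i + 1) ω j * η (i + 1) ω a ∂P = 0 := by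
              have h0' := (indE j a).integral_fun_mul_eq_mul_integral (ms j).aestronglyMeasurable
                (me a).aestronglyMeasurable
              rw [Esa j, zero_mul] at h0'
              exact h0'
            have h := (indD j a).integral_fun_mul_eq_mul_integral (mgja j a).aestronglyMeasurable
              ((ms j).mul (me a)).aestronglyMeasurable
            rw [h0, mul_zero] at h
            exact h
    -- splitting the expectation of the squared norm
    have i4 : Integrable (fun ω => 2 * ⟪X i ω, ∑ j, ξ (i + 1) ω j • g (X i ω) j⟫) P :=
      iC1.const_mul 2
    have i5 : Integrable (fun ω => 2 * ⟪X i ω, η (i + 1) ω⟫) P := iC2.const_mul 2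
    have i6 : Integrable
        (fun ω => 2 * ⟪∑ j, ξ (i + 1) ω j • g (X i ω) j, η (i + 1) ω⟫) P := iC3.const_mul 2
    have s2i : Integrable (fun ω => ‖X i ω‖ ^ 2
        + ‖∑ j, ξ (i + 1) ω j • g (X i ω) j‖ ^ 2) P := hx2.add iGs2
    have s3i : Integrable (fun ω => ‖X i ω‖ ^ 2
        + ‖∑ j, ξ (i + 1) ω j • g (X i ω) j‖ ^ 2 + ‖η (i + 1) ω‖ ^ 2) P := s2i.add he2
    have s4i : Integrable (fun ω => ‖X i ω‖ ^ 2
        + ‖∑ j, ξ (i + 1) ω j • g (X i ω) j‖ ^ 2 + ‖η (i + 1) ω‖ ^ 2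
        + 2 * ⟪X i ω, ∑ j, ξ (i + 1) ω j • g (X i ω) j⟫) P := s3i.add i4
    have s5i : Integrable (fun ω => ‖X i ω‖ ^ 2
        + ‖∑ j, ξ (i + 1) ω j • g (X i ω) j‖ ^ 2 + ‖η (i + 1) ω‖ ^ 2
        + 2 * ⟪X i ω, ∑ j, ξ (i + 1) ω j • g (X i ω) j⟫
        + 2 * ⟪X i ω, η (i + 1) ω⟫) P := s4i.add i5
    have s6i : Integrable (fun ω => ‖X i ω‖ ^ 2
        + ‖∑ j, ξ (i + 1) ω j • g (X i ω) j‖ ^ 2 + ‖η (i + 1) ω‖ ^ 2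
        + 2 * ⟪X i ω, ∑ j, ξ (i + 1) ω j • g (X i ω) j⟫
        + 2 * ⟪X i ω, η (i + 1) ω⟫
        + 2 * ⟪∑ j, ξ (i + 1) ω j • g (X i ω) j, η (i + 1) ω⟫) P := s5i.add i6
    have hsplit : ∫ ω, ‖X i ω + (∑ j, ξ (i + 1) ω j • g (X i ω) j) + η (i + 1) ω‖ ^ 2 ∂P
        = (∫ ω, ‖X i ω‖ ^ 2 ∂P) + (∫ ω, ‖∑ j, ξ (i + 1) ω j • g (X i ω) j‖ ^ 2 ∂P)
          + (∫ ω, ‖η (i + 1) ω‖ ^ 2 ∂P)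
          + 2 * (∫ ω, ⟪X i ω, ∑ j, ξ (i + 1) ω j • g (X i ω) j⟫ ∂P)
          + 2 * (∫ ω, ⟪X i ω, η (i + 1) ω⟫ ∂P)
          + 2 * (∫ ω, ⟪∑ j, ξ (i + 1) ω j • g (X i ω) j, η (i + 1) ω⟫ ∂P) := by
      rw [integral_congr_ae (ae_of_all _ fun ω =>
        em_norm_add3_sq (X i ω) (∑ j, ξ (i + 1) ω j • g (X i ω) j) (η (i + 1) ω))]
      rw [integral_add s5i i6, integral_add s4i i5, integral_add s3i i4,
        integral_add s2i he2, integral_add hx2 iGs2,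
        integral_const_mul, integral_const_mul, integral_const_mul]
    -- bounding the right-hand side
    have hGsum_le : ∫ ω, (∑ j, ‖g (X i ω) j‖ ^ 2) ∂P
        ≤ M₂ * (∫ ω, ‖X i ω‖ ^ 2 ∂P) + m₂ := by
      have h := integral_mono hgsum Dm (fun ω => hg (X i ω))
      rwa [integral_add (hx2.const_mul M₂) (integrable_const m₂), integral_const_mul,
        integral_const, probReal_univ, smul_eq_mul, one_mul] at h
    have hη_le : ∫ ω, ‖η (i + 1) ω‖ ^ 2 ∂P ≤ Δt := by
      have h21 : (1:ℝ) ≤ 2 / γ₀ :=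
        (one_le_div (by linarith [hγ₀.1] : (0:ℝ) < γ₀)).mpr (by linarith [hγ₀.2])
      have h := Real.rpow_le_rpow_of_exponent_ge hΔt0 hΔt1.le h21
      rw [Real.rpow_one] at h
      exact (hη2 i).trans h
    -- the a.e. lower bound from the implicit recurrence
    have hae : ∀ᵐ ω ∂P,
        (1 - 2 * M₁ * Δt) * ‖X (i + 1) ω‖ ^ 2 - 2 * Δt * m₁
          ≤ ‖X i ω + (∑ j, ξ (i + 1) ω j • g (X i ω) j) + η (i + 1) ω‖ ^ 2 := by
      filter_upwards [hrec i] with ω hω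
      have hid : X i ω + (∑ j, ξ (i + 1) ω j • g (X i ω) j) + η (i + 1) ω
          = X (i + 1) ω - Δt • f (X (i + 1) ω) := by
        nth_rewrite 1 [hω]
        abel
      rw [hid, norm_sub_sq_real, real_inner_smul_right]
      have h1 := hf (X (i + 1) ω)
      have h2 : 2 * Δt * ⟪X (i + 1) ω, f (X (i + 1) ω)⟫
          ≤ 2 * Δt * (M₁ * ‖X (i + 1) ω‖ ^ 2 + m₁) := by nlinarith
      nlinarith [sq_nonneg ‖Δt • f (X (i + 1) ω)‖]
    have ileft : Integrable
        (fun ω => (1 - 2 * M₁ * Δt) * ‖X (i + 1) ω‖ ^ 2 - 2 * Δt * m₁) P :=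
      (hx'2.const_mul _).sub (integrable_const _)
    have iY : Integrable
        (fun ω => ‖X i ω + (∑ j, ξ (i + 1) ω j • g (X i ω) j) + η (i + 1) ω‖ ^ 2) P :=
      s6i.congr (ae_of_all _ fun ω =>
        (em_norm_add3_sq (X i ω) (∑ j, ξ (i + 1) ω j • g (X i ω) j) (η (i + 1) ω)).symm)
    have hmono := integral_mono_ae ileft iY hae
    have hleft : ∫ ω, ((1 - 2 * M₁ * Δt) * ‖X (i + 1) ω‖ ^ 2 - 2 * Δt * m₁) ∂P
        = (1 - 2 * M₁ * Δt) * (∫ ω, ‖X (i + 1) ω‖ ^ 2 ∂P) - 2 * Δt * m₁ := by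
      rw [integral_sub (hx'2.const_mul _) (integrable_const _), integral_const_mul,
        integral_const, probReal_univ, smul_eq_mul, one_mul]
    rw [hleft, hsplit, EGs2, EC1, EC2, EC3] at hmono
    have key : (1 - 2 * M₁ * Δt) * (∫ ω, ‖X (i + 1) ω‖ ^ 2 ∂P)
        ≤ (1 + M₂ * Δt) * (∫ ω, ‖X i ω‖ ^ 2 ∂P) + (2 * m₁ + m₂ + 1) * Δt := by
      have h3 : Δt * (∫ ω, (∑ j, ‖g (X i ω) j‖ ^ 2) ∂P)
          ≤ Δt * (M₂ * (∫ ω, ‖X i ω‖ ^ 2 ∂P) + m₂) :=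
        mul_le_mul_of_nonneg_left hGsum_le hΔt0.le
      nlinarith [hmono, hη_le, h3]
    rw [show (1 + M₂ * Δt) / (1 - 2 * M₁ * Δt) * (∫ ω, ‖X i ω‖ ^ 2 ∂P)
        + (2 * m₁ + m₂ + 1) * Δt / (1 - 2 * M₁ * Δt)
        = ((1 + M₂ * Δt) * (∫ ω, ‖X i ω‖ ^ 2 ∂P) + (2 * m₁ + m₂ + 1) * Δt)
          / (1 - 2 * M₁ * Δt) from by ring,
      le_div_iff₀ hden]
    nlinarith [key]
  intro i _
  exact em_geo_rec _ _ hQ10 hQ1lt (fun i => ∫ ω, ‖X i ω‖ ^ 2 ∂P) step i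
end

section
/- Let (Ω, F, P) be a probability space, d, m ≥ 1, Δt > 0 with 1 − 2K₃Δt > 0. Let f : ℝ^d → ℝ^d satisfy ⟨x − y, f(x) − f(y)⟩ ≤ K₃‖x − y‖² for all x, y ∈ ℝ^d, and let g : ℝ^d → ℝ^{d×m} be measurable with ‖g(x) − g(y)‖² ≤ K₄‖x − y‖² for all x, y ∈ ℝ^d, K₄ > 0. Let W₁, W₂, Z₁, Z₂ : Ω → ℝ^d and ξ : Ω → ℝ^m be square-integrable random variables such that ξ is independent of the pair (W₁, W₂), E[ξ] = 0, E[ξ_a ξ_b] = Δt·δ_{ab} for all coordinates a, b, and Z₁ − Z₂ = W₁ − W₂ + Δt(f(Z₁) − f(Z₂)) + (g(W₁) − g(W₂))ξ almost surely. Then E‖Z₁ − Z₂‖² ≤ ((1 + K₄Δt)/(1 − 2K₃Δt))·E‖W₁ − W₂‖². -/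
open Real MeasureTheory ProbabilityTheory
open scoped RealInnerProductSpace

private lemma sq_norm_sub_le' {F : Type*} [SeminormedAddGroup F] (a b : F) :
    ‖a - b‖ ^ 2 ≤ 2 * ‖a‖ ^ 2 + 2 * ‖b‖ ^ 2 := by
  have h := pow_le_pow_left₀ (norm_nonneg (a - b)) (norm_sub_le a b) 2
  nlinarith [sq_nonneg (‖a‖ - ‖b‖)]

private lemma expand_sq {F : Type*} [NormedAddCommGroup F] [InnerProductSpace ℝ F] {m : ℕ}
    (w : F) (c : Fin m → ℝ) (v : Fin m → F) :
    ‖w + ∑ j, c j • v j‖ ^ 2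
      = ‖w‖ ^ 2 + 2 * (∑ j, c j * ⟪w, v j⟫)
        + ∑ j, ∑ k, (c j * c k) * ⟪v j, v k⟫ := by
  rw [norm_add_sq_real]
  congr 1
  · congr 1
    rw [inner_sum]
    simp [real_inner_smul_right]
  · rw [← real_inner_self_eq_norm_sq, sum_inner]
    refine Finset.sum_congr rfl (fun j _ => ?_)
    rw [inner_sum]
    refine Finset.sum_congr rfl (fun k _ => ?_)
    rw [real_inner_smul_left, real_inner_smul_right]
    ring

private lemma coord_abs_le_norm {n : ℕ} (x : EuclideanSpace ℝ (Fin n)) (j : Fin n) :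
    |x j| ≤ ‖x‖ := by
  rw [EuclideanSpace.norm_eq,
    show |x j| = Real.sqrt (|x j| ^ 2) by rw [Real.sqrt_sq_eq_abs, abs_abs]]
  exact Real.sqrt_le_sqrt (by
    simpa [sq_abs] using
      Finset.single_le_sum (f := fun i => ‖x i‖ ^ 2) (fun i _ => sq_nonneg _) (Finset.mem_univ j))

set_option maxHeartbeats 1000000 in
/-- One-step mean-square contraction estimate (proof of Lemma 4.2): for one step of the
semi-implicit Euler–Maruyama method applied to two inputs `W₁`, `W₂` driven by the same
Brownian increment `ξ`,
`E‖Z₁ − Z₂‖² ≤ ((1 + K₄Δt)/(1 − 2K₃Δt))·E‖W₁ − W₂‖²`.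
A `d × m` matrix is represented by its columns `g x : Fin m → ℝ^d`; its Frobenius norm
squared is `∑ j, ‖g x j‖²` and the matrix-vector product is `∑ j, ξ_j • (column j)`. -/
theorem semi_implicit_EM_one_step_contraction
    (Ω : Type*) [MeasurableSpace Ω] (P : Measure Ω) [IsProbabilityMeasure P]
    (d m : ℕ) (hd : 1 ≤ d) (hm : 1 ≤ m)
    (Δt K₃ K₄ : ℝ) (hΔt : 0 < Δt) (hK₃ : 0 < 1 - 2 * K₃ * Δt) (hK₄ : 0 < K₄)
    (f : EuclideanSpace ℝ (Fin d) → EuclideanSpace ℝ (Fin d))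
    (hf : ∀ x y : EuclideanSpace ℝ (Fin d), ⟪x - y, f x - f y⟫ ≤ K₃ * ‖x - y‖ ^ 2)
    (g : EuclideanSpace ℝ (Fin d) → Fin m → EuclideanSpace ℝ (Fin d))
    (hgmeas : Measurable g)
    (hg : ∀ x y : EuclideanSpace ℝ (Fin d),
      (∑ j, ‖g x j - g y j‖ ^ 2) ≤ K₄ * ‖x - y‖ ^ 2)
    (W₁ W₂ Z₁ Z₂ : Ω → EuclideanSpace ℝ (Fin d)) (ξ : Ω → EuclideanSpace ℝ (Fin m))
    (hW₁meas : Measurable W₁) (hW₂meas : Measurable W₂)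
    (hZ₁meas : Measurable Z₁) (hZ₂meas : Measurable Z₂) (hξmeas : Measurable ξ)
    (hW₁2 : Integrable (fun ω => ‖W₁ ω‖ ^ 2) P)
    (hW₂2 : Integrable (fun ω => ‖W₂ ω‖ ^ 2) P)
    (hZ₁2 : Integrable (fun ω => ‖Z₁ ω‖ ^ 2) P)
    (hZ₂2 : Integrable (fun ω => ‖Z₂ ω‖ ^ 2) P)
    (hξ2 : Integrable (fun ω => ‖ξ ω‖ ^ 2) P)
    (hindep : IndepFun ξ (fun ω => (W₁ ω, W₂ ω)) P)
    (hξmean : ∫ ω, ξ ω ∂P = 0)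
    (hξcov : ∀ a b : Fin m, ∫ ω, ξ ω a * ξ ω b ∂P = if a = b then Δt else 0)
    (hrec : ∀ᵐ ω ∂P,
      Z₁ ω - Z₂ ω = W₁ ω - W₂ ω + Δt • (f (Z₁ ω) - f (Z₂ ω))
        + ∑ j, ξ ω j • (g (W₁ ω) j - g (W₂ ω) j)) :
    ∫ ω, ‖Z₁ ω - Z₂ ω‖ ^ 2 ∂P
      ≤ ((1 + K₄ * Δt) / (1 - 2 * K₃ * Δt)) * ∫ ω, ‖W₁ ω - W₂ ω‖ ^ 2 ∂P := by
  classical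
  -- Measurability facts
  have hgj : ∀ j : Fin m, Measurable (fun x => g x j) :=
    fun j => (measurable_pi_apply j).comp hgmeas
  have hΔWmeas : Measurable (fun ω => W₁ ω - W₂ ω) := hW₁meas.sub hW₂meas
  have hΔZmeas : Measurable (fun ω => Z₁ ω - Z₂ ω) := hZ₁meas.sub hZ₂meas
  have hGmeas : ∀ j : Fin m, Measurable (fun ω => g (W₁ ω) j - g (W₂ ω) j) :=
    fun j => ((hgj j).comp hW₁meas).sub ((hgj j).comp hW₂meas)
  have hξjmeas : ∀ j : Fin m, Measurable (fun ω => ξ ω j) :=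
    fun j => (measurable_pi_apply j).comp ((WithLp.measurable_ofLp 2 _).comp hξmeas)
  -- Integrability of the squared differences
  have hΔW2 : Integrable (fun ω => ‖W₁ ω - W₂ ω‖ ^ 2) P := by
    refine Integrable.mono' ((hW₁2.const_mul 2).add (hW₂2.const_mul 2))
      ((hΔWmeas.norm.pow_const 2).aestronglyMeasurable) ?_
    filter_upwards with ω
    try simp only [Pi.add_apply]
    rw [Real.norm_eq_abs, abs_of_nonneg (by positivity)]
    exact sq_norm_sub_le' (W₁ ω) (W₂ ω)
  have hΔZ2 : Integrable (fun ω => ‖Z₁ ω - Z₂ ω‖ ^ 2) P := by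
    refine Integrable.mono' ((hZ₁2.const_mul 2).add (hZ₂2.const_mul 2))
      ((hΔZmeas.norm.pow_const 2).aestronglyMeasurable) ?_
    filter_upwards with ω
    try simp only [Pi.add_apply]
    rw [Real.norm_eq_abs, abs_of_nonneg (by positivity)]
    exact sq_norm_sub_le' (Z₁ ω) (Z₂ ω)
  -- pointwise bounds for G
  have hGbd : ∀ (ω : Ω) (j : Fin m),
      ‖g (W₁ ω) j - g (W₂ ω) j‖ ^ 2 ≤ K₄ * ‖W₁ ω - W₂ ω‖ ^ 2 := by
    intro ω j
    calc ‖g (W₁ ω) j - g (W₂ ω) j‖ ^ 2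
        ≤ ∑ k, ‖g (W₁ ω) k - g (W₂ ω) k‖ ^ 2 :=
          Finset.single_le_sum (f := fun k => ‖g (W₁ ω) k - g (W₂ ω) k‖ ^ 2)
            (fun k _ => sq_nonneg _) (Finset.mem_univ j)
      _ ≤ K₄ * ‖W₁ ω - W₂ ω‖ ^ 2 := hg _ _
  have hGj2int : ∀ j : Fin m, Integrable (fun ω => ‖g (W₁ ω) j - g (W₂ ω) j‖ ^ 2) P := by
    intro j
    refine Integrable.mono' (hΔW2.const_mul K₄)
      (((hGmeas j).norm.pow_const 2).aestronglyMeasurable) ?_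
    filter_upwards with ω
    try simp only [Pi.add_apply]
    rw [Real.norm_eq_abs, abs_of_nonneg (by positivity)]
    exact hGbd ω j
  have hGjkint : ∀ j k : Fin m,
      Integrable (fun ω => ⟪g (W₁ ω) j - g (W₂ ω) j, g (W₁ ω) k - g (W₂ ω) k⟫) P := by
    intro j k
    refine Integrable.mono' (hΔW2.const_mul K₄)
      (((hGmeas j).inner (hGmeas k)).aestronglyMeasurable) ?_
    filter_upwards with ω
    try simp only [Pi.add_apply]
    rw [Real.norm_eq_abs]
    have h1 := abs_real_inner_le_norm (g (W₁ ω) j - g (W₂ ω) j) (g (W₁ ω) k - g (W₂ ω) k)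
    have h2 := hGbd ω j
    have h3 := hGbd ω k
    nlinarith [norm_nonneg (g (W₁ ω) j - g (W₂ ω) j), norm_nonneg (g (W₁ ω) k - g (W₂ ω) k),
      sq_nonneg (‖g (W₁ ω) j - g (W₂ ω) j‖ - ‖g (W₁ ω) k - g (W₂ ω) k‖)]
  have hWGint : ∀ j : Fin m,
      Integrable (fun ω => ⟪W₁ ω - W₂ ω, g (W₁ ω) j - g (W₂ ω) j⟫) P := by
    intro j
    refine Integrable.mono' (hΔW2.add (hΔW2.const_mul K₄))
      ((hΔWmeas.inner (hGmeas j)).aestronglyMeasurable) ?_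
    filter_upwards with ω
    try simp only [Pi.add_apply]
    rw [Real.norm_eq_abs]
    have h1 := abs_real_inner_le_norm (W₁ ω - W₂ ω) (g (W₁ ω) j - g (W₂ ω) j)
    have h2 := hGbd ω j
    nlinarith [norm_nonneg (W₁ ω - W₂ ω), norm_nonneg (g (W₁ ω) j - g (W₂ ω) j),
      sq_nonneg (‖W₁ ω - W₂ ω‖ - ‖g (W₁ ω) j - g (W₂ ω) j‖)]
  have hξjint : ∀ j : Fin m, Integrable (fun ω => ξ ω j) P := by
    intro j
    refine Integrable.mono' ((integrable_const (1 : ℝ)).add hξ2)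
      ((hξjmeas j).aestronglyMeasurable) ?_
    filter_upwards with ω
    try simp only [Pi.add_apply]
    rw [Real.norm_eq_abs]
    have h1 := coord_abs_le_norm (ξ ω) j
    nlinarith [norm_nonneg (ξ ω), sq_nonneg (‖ξ ω‖ - 1)]
  have hξjkint : ∀ j k : Fin m, Integrable (fun ω => ξ ω j * ξ ω k) P := by
    intro j k
    refine Integrable.mono' hξ2 (((hξjmeas j).mul (hξjmeas k)).aestronglyMeasurable) ?_
    filter_upwards with ω
    try simp only [Pi.add_apply]
    rw [Real.norm_eq_abs, abs_mul]
    have h1 := coord_abs_le_norm (ξ ω) j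
    have h2 := coord_abs_le_norm (ξ ω) k
    nlinarith [abs_nonneg (ξ ω j), abs_nonneg (ξ ω k), norm_nonneg (ξ ω)]
  -- Independence of the relevant composed random variables
  have hindep1 : ∀ j : Fin m,
      IndepFun (fun ω => ξ ω j)
        (fun ω => ⟪W₁ ω - W₂ ω, g (W₁ ω) j - g (W₂ ω) j⟫) P := by
    intro j
    exact hindep.comp ((measurable_pi_apply j).comp (WithLp.measurable_ofLp 2 _))
      ((measurable_fst.sub measurable_snd).inner
        (((hgj j).comp measurable_fst).sub ((hgj j).comp measurable_snd)))
  have hindep2 : ∀ j k : Fin m,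
      IndepFun (fun ω => ξ ω j * ξ ω k)
        (fun ω => ⟪g (W₁ ω) j - g (W₂ ω) j, g (W₁ ω) k - g (W₂ ω) k⟫) P := by
    intro j k
    exact hindep.comp (((measurable_pi_apply j).comp (WithLp.measurable_ofLp 2 _)).mul
        ((measurable_pi_apply k).comp (WithLp.measurable_ofLp 2 _)))
      ((((hgj j).comp measurable_fst).sub ((hgj j).comp measurable_snd)).inner
        (((hgj k).comp measurable_fst).sub ((hgj k).comp measurable_snd)))
  -- mean zero coordinatewise
  have hξint : Integrable ξ P := by
    refine Integrable.mono' ((integrable_const (1 : ℝ)).add hξ2)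
      hξmeas.aestronglyMeasurable ?_
    filter_upwards with ω
    try simp only [Pi.add_apply]
    nlinarith [norm_nonneg (ξ ω), sq_nonneg (‖ξ ω‖ - 1)]
  have hξjmean : ∀ j : Fin m, ∫ ω, ξ ω j ∂P = 0 := by
    intro j
    have h := (EuclideanSpace.proj (𝕜 := ℝ) j).integral_comp_comm hξint
    simpa [hξmean] using h
  -- the cross terms vanish
  have hcross : ∀ j : Fin m,
      ∫ ω, ξ ω j * ⟪W₁ ω - W₂ ω, g (W₁ ω) j - g (W₂ ω) j⟫ ∂P = 0 := by
    intro j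
    have h : ∫ ω, ξ ω j * ⟪W₁ ω - W₂ ω, g (W₁ ω) j - g (W₂ ω) j⟫ ∂P
        = (∫ ω, ξ ω j ∂P) * ∫ ω, ⟪W₁ ω - W₂ ω, g (W₁ ω) j - g (W₂ ω) j⟫ ∂P :=
      (hindep1 j).integral_mul_eq_mul_integral (hξjint j).aestronglyMeasurable
        (hWGint j).aestronglyMeasurable
    rw [h, hξjmean j, zero_mul]
  -- the quadratic terms
  have hquad : ∀ j k : Fin m,
      ∫ ω, (ξ ω j * ξ ω k) * ⟪g (W₁ ω) j - g (W₂ ω) j, g (W₁ ω) k - g (W₂ ω) k⟫ ∂P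
        = (if j = k then Δt else 0)
            * ∫ ω, ⟪g (W₁ ω) j - g (W₂ ω) j, g (W₁ ω) k - g (W₂ ω) k⟫ ∂P := by
    intro j k
    have h : ∫ ω, (ξ ω j * ξ ω k) * ⟪g (W₁ ω) j - g (W₂ ω) j, g (W₁ ω) k - g (W₂ ω) k⟫ ∂P
        = (∫ ω, ξ ω j * ξ ω k ∂P)
            * ∫ ω, ⟪g (W₁ ω) j - g (W₂ ω) j, g (W₁ ω) k - g (W₂ ω) k⟫ ∂P :=
      (hindep2 j k).integral_mul_eq_mul_integral (hξjkint j k).aestronglyMeasurable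
        (hGjkint j k).aestronglyMeasurable
    rw [h, hξcov j k]
  -- integrability of the cross/quadratic terms
  have hcrossint : ∀ j : Fin m,
      Integrable (fun ω => ξ ω j * ⟪W₁ ω - W₂ ω, g (W₁ ω) j - g (W₂ ω) j⟫) P :=
    fun j => (hindep1 j).integrable_mul (hξjint j) (hWGint j)
  have hquadint : ∀ j k : Fin m,
      Integrable (fun ω =>
        (ξ ω j * ξ ω k) * ⟪g (W₁ ω) j - g (W₂ ω) j, g (W₁ ω) k - g (W₂ ω) k⟫) P :=
    fun j k => (hindep2 j k).integrable_mul (hξjkint j k) (hGjkint j k)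
  have hAint : Integrable
      (fun ω => ∑ j, ξ ω j * ⟪W₁ ω - W₂ ω, g (W₁ ω) j - g (W₂ ω) j⟫) P :=
    integrable_finset_sum _ (fun j _ => hcrossint j)
  have hBint : Integrable
      (fun ω => ∑ j, ∑ k,
        (ξ ω j * ξ ω k) * ⟪g (W₁ ω) j - g (W₂ ω) j, g (W₁ ω) k - g (W₂ ω) k⟫) P :=
    integrable_finset_sum _ (fun j _ => integrable_finset_sum _ (fun k _ => hquadint j k))
  -- pointwise expansion of ‖U‖²
  have hU2 : ∀ ω : Ω,
      ‖(W₁ ω - W₂ ω) + ∑ j, ξ ω j • (g (W₁ ω) j - g (W₂ ω) j)‖ ^ 2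
        = ‖W₁ ω - W₂ ω‖ ^ 2
          + 2 * (∑ j, ξ ω j * ⟪W₁ ω - W₂ ω, g (W₁ ω) j - g (W₂ ω) j⟫)
          + ∑ j, ∑ k,
            (ξ ω j * ξ ω k) * ⟪g (W₁ ω) j - g (W₂ ω) j, g (W₁ ω) k - g (W₂ ω) k⟫ := by
    intro ω
    exact expand_sq (W₁ ω - W₂ ω) (fun j => ξ ω j) (fun j => g (W₁ ω) j - g (W₂ ω) j)
  have hUint : Integrable
      (fun ω => ‖(W₁ ω - W₂ ω) + ∑ j, ξ ω j • (g (W₁ ω) j - g (W₂ ω) j)‖ ^ 2) P := by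
    refine ((hΔW2.add (hAint.const_mul 2)).add hBint).congr ?_
    filter_upwards with ω
    exact (hU2 ω).symm
  -- the integral of ‖U‖²
  have hIA : ∫ ω, (∑ j, ξ ω j * ⟪W₁ ω - W₂ ω, g (W₁ ω) j - g (W₂ ω) j⟫) ∂P = 0 := by
    rw [integral_finset_sum _ (fun j _ => hcrossint j)]
    exact Finset.sum_eq_zero (fun j _ => hcross j)
  have hIB : ∫ ω, (∑ j, ∑ k,
      (ξ ω j * ξ ω k) * ⟪g (W₁ ω) j - g (W₂ ω) j, g (W₁ ω) k - g (W₂ ω) k⟫) ∂P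
      = Δt * ∫ ω, (∑ j, ‖g (W₁ ω) j - g (W₂ ω) j‖ ^ 2) ∂P := by
    rw [integral_finset_sum _ (fun j _ => integrable_finset_sum _ (fun k _ => hquadint j k))]
    have hj : ∀ j : Fin m, ∫ ω, (∑ k,
        (ξ ω j * ξ ω k) * ⟪g (W₁ ω) j - g (W₂ ω) j, g (W₁ ω) k - g (W₂ ω) k⟫) ∂P
        = Δt * ∫ ω, ‖g (W₁ ω) j - g (W₂ ω) j‖ ^ 2 ∂P := by
      intro j
      rw [integral_finset_sum _ (fun k _ => hquadint j k)]
      rw [Finset.sum_eq_single j]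
      · rw [hquad j j, if_pos rfl]
        congr 1
        refine integral_congr_ae ?_
        filter_upwards with ω
        exact real_inner_self_eq_norm_sq _
      · intro k _ hkj
        rw [hquad j k, if_neg (Ne.symm hkj), zero_mul]
      · intro h
        exact absurd (Finset.mem_univ j) h
    simp only [hj]
    rw [← Finset.mul_sum, integral_finset_sum _ (fun j _ => hGj2int j)]
  have hGsumint : Integrable (fun ω => ∑ j, ‖g (W₁ ω) j - g (W₂ ω) j‖ ^ 2) P :=
    integrable_finset_sum _ (fun j _ => hGj2int j)
  have hGsum_le : ∫ ω, (∑ j, ‖g (W₁ ω) j - g (W₂ ω) j‖ ^ 2) ∂P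
      ≤ K₄ * ∫ ω, ‖W₁ ω - W₂ ω‖ ^ 2 ∂P := by
    rw [← integral_const_mul _ _]
    refine integral_mono_ae hGsumint (hΔW2.const_mul K₄) ?_
    filter_upwards with ω
    exact hg _ _
  have hIU : ∫ ω, ‖(W₁ ω - W₂ ω) + ∑ j, ξ ω j • (g (W₁ ω) j - g (W₂ ω) j)‖ ^ 2 ∂P
      ≤ (1 + K₄ * Δt) * ∫ ω, ‖W₁ ω - W₂ ω‖ ^ 2 ∂P := by
    have hexp : ∫ ω, ‖(W₁ ω - W₂ ω) + ∑ j, ξ ω j • (g (W₁ ω) j - g (W₂ ω) j)‖ ^ 2 ∂P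
        = ∫ ω, ‖W₁ ω - W₂ ω‖ ^ 2 ∂P
          + Δt * ∫ ω, (∑ j, ‖g (W₁ ω) j - g (W₂ ω) j‖ ^ 2) ∂P := by
      have i2 : Integrable (fun ω =>
          2 * ∑ j, ξ ω j * ⟪W₁ ω - W₂ ω, g (W₁ ω) j - g (W₂ ω) j⟫) P := hAint.const_mul 2
      have i1 : Integrable (fun ω => ‖W₁ ω - W₂ ω‖ ^ 2
          + 2 * ∑ j, ξ ω j * ⟪W₁ ω - W₂ ω, g (W₁ ω) j - g (W₂ ω) j⟫) P := hΔW2.add i2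
      rw [integral_congr_ae (Filter.Eventually.of_forall hU2),
        integral_add i1 hBint, integral_add hΔW2 i2, integral_const_mul, hIA, hIB]
      ring
    rw [hexp]
    nlinarith [mul_le_mul_of_nonneg_left hGsum_le hΔt.le]
  -- pointwise contraction estimate
  have hpt : ∀ᵐ ω ∂P, (1 - 2 * K₃ * Δt) * ‖Z₁ ω - Z₂ ω‖ ^ 2
      ≤ ‖(W₁ ω - W₂ ω) + ∑ j, ξ ω j • (g (W₁ ω) j - g (W₂ ω) j)‖ ^ 2 := by
    filter_upwards [hrec] with ω hω
    have hU : (W₁ ω - W₂ ω) + ∑ j, ξ ω j • (g (W₁ ω) j - g (W₂ ω) j)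
        = (Z₁ ω - Z₂ ω) - Δt • (f (Z₁ ω) - f (Z₂ ω)) := by
      rw [hω]; abel
    have h1 : ⟪Z₁ ω - Z₂ ω, (W₁ ω - W₂ ω) + ∑ j, ξ ω j • (g (W₁ ω) j - g (W₂ ω) j)⟫
        = ‖Z₁ ω - Z₂ ω‖ ^ 2 - Δt * ⟪Z₁ ω - Z₂ ω, f (Z₁ ω) - f (Z₂ ω)⟫ := by
      rw [hU, inner_sub_right, real_inner_smul_right, real_inner_self_eq_norm_sq]
    have h2 : ⟪Z₁ ω - Z₂ ω, f (Z₁ ω) - f (Z₂ ω)⟫ ≤ K₃ * ‖Z₁ ω - Z₂ ω‖ ^ 2 := hf _ _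
    have h3 := real_inner_le_norm (Z₁ ω - Z₂ ω)
      ((W₁ ω - W₂ ω) + ∑ j, ξ ω j • (g (W₁ ω) j - g (W₂ ω) j))
    nlinarith [sq_nonneg (‖Z₁ ω - Z₂ ω‖
        - ‖(W₁ ω - W₂ ω) + ∑ j, ξ ω j • (g (W₁ ω) j - g (W₂ ω) j)‖),
      mul_le_mul_of_nonneg_left h2 hΔt.le]
  have hleft : (1 - 2 * K₃ * Δt) * ∫ ω, ‖Z₁ ω - Z₂ ω‖ ^ 2 ∂P
      ≤ ∫ ω, ‖(W₁ ω - W₂ ω) + ∑ j, ξ ω j • (g (W₁ ω) j - g (W₂ ω) j)‖ ^ 2 ∂P := by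
    rw [← integral_const_mul _ _]
    exact integral_mono_ae (hΔZ2.const_mul _) hUint hpt
  rw [div_mul_eq_mul_div, le_div_iff₀ hK₃]
  nlinarith [hleft, hIU]
end

section
/- Let (Ω, F, P) be a probability space, d, m ≥ 1 and Δt ∈ (0,1). Let f : ℝ^d → ℝ^d satisfy ⟨u − v, f(u) − f(v)⟩ ≤ K₃‖u − v‖² for all u, v ∈ ℝ^d with K₃ < −1/2, and let g : ℝ^d → ℝ^{d×m} be measurable with ‖g(u) − g(v)‖² ≤ K₄‖u − v‖² for all u, v ∈ ℝ^d, where K₄ > 0 and K₄ + 2K₃ < −1. Let x, y ∈ ℝ^d and let X_i^x, X_i^y : Ω → ℝ^d (i ≥ 0), ξ_{i+1} : Ω → ℝ^m, η_{i+1} : Ω → ℝ^d (i ≥ 0) be square-integrable random variables such that X_0^x = x, X_0^y = y and, for each i ≥ 0: X_{i+1}^x = X_i^x + f(X_{i+1}^x)Δt + g(X_i^x)ξ_{i+1} + η_{i+1} and X_{i+1}^y = X_i^y + f(X_{i+1}^y)Δt + g(X_i^y)ξ_{i+1} + η_{i+1} almost surely, where ξ_{i+1} is independent of the pair (X_i^x,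 X_i^y), E[ξ_{i+1}] = 0 and E[ξ_{i+1,a} ξ_{i+1,b}] = Δt·δ_{ab} for all coordinates a, b. Set Q₃ = (1 + K₄Δt)/(1 − 2K₃Δt). Then Q₃ < 1, for every i ≥ 0 one has E‖X_i^x − X_i^y‖² ≤ Q₃^i ‖x − y‖², and consequently lim_{i→∞} E‖X_i^x − X_i^y‖² = 0. -/
open Real MeasureTheory ProbabilityTheory Filter
open scoped RealInnerProductSpace Topology

set_option maxHeartbeats 1000000

private lemma sq_coord_le {m : ℕ} (v : EuclideanSpace ℝ (Fin m)) (j : Fin m) :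
    (v j) ^ 2 ≤ ‖v‖ ^ 2 := by
  have h2 : ‖v‖ ^ 2 = ∑ i, ‖v i‖ ^ 2 := by
    rw [EuclideanSpace.norm_eq, Real.sq_sqrt (Finset.sum_nonneg fun i _ => sq_nonneg _)]
  rw [h2]
  calc (v j)^2 = ‖v j‖^2 := by rw [Real.norm_eq_abs, sq_abs]
  _ ≤ ∑ i, ‖v i‖^2 := Finset.single_le_sum (f := fun i => ‖v i‖^2)
      (fun i _ => sq_nonneg _) (Finset.mem_univ j)

private lemma integrable_of_sq_int {Ω : Type*} [MeasurableSpace Ω] {P : Measure Ω}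
    [IsProbabilityMeasure P] {E : Type*} [NormedAddCommGroup E]
    {F : Ω → E} (hm : AEStronglyMeasurable F P)
    (h2 : Integrable (fun ω => ‖F ω‖ ^ 2) P) : Integrable F P := by
  refine (h2.add (integrable_const 1)).mono' hm ?_
  filter_upwards with ω
  have : ‖F ω‖ ≤ ‖F ω‖^2 + 1 := by nlinarith [norm_nonneg (F ω), sq_nonneg (‖F ω‖ - 1)]
  simpa using this

private lemma contraction_step
    {Ω : Type*} [MeasurableSpace Ω] {P : Measure Ω} [IsProbabilityMeasure P]
    {d m : ℕ} {Δt K₃ K₄ : ℝ} (hΔt0 : 0 < Δt)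
    (hK₃ : K₃ < 0) (hK₄ : 0 < K₄)
    {f : EuclideanSpace ℝ (Fin d) → EuclideanSpace ℝ (Fin d)}
    (hf : ∀ u v : EuclideanSpace ℝ (Fin d), ⟪u - v, f u - f v⟫ ≤ K₃ * ‖u - v‖ ^ 2)
    {g : EuclideanSpace ℝ (Fin d) → Fin m → EuclideanSpace ℝ (Fin d)}
    (hgmeas : Measurable g)
    (hg : ∀ u v : EuclideanSpace ℝ (Fin d),
      (∑ j, ‖g u j - g v j‖ ^ 2) ≤ K₄ * ‖u - v‖ ^ 2)
    {A B A' B' : Ω → EuclideanSpace ℝ (Fin d)} {ξ₁ : Ω → EuclideanSpace ℝ (Fin m)}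
    (hA : Measurable A) (hB : Measurable B) (hA' : Measurable A') (hB' : Measurable B')
    (hξm : Measurable ξ₁)
    (hA2 : Integrable (fun ω => ‖A ω‖ ^ 2) P) (hB2 : Integrable (fun ω => ‖B ω‖ ^ 2) P)
    (hA'2 : Integrable (fun ω => ‖A' ω‖ ^ 2) P) (hB'2 : Integrable (fun ω => ‖B' ω‖ ^ 2) P)
    (hξ2 : Integrable (fun ω => ‖ξ₁ ω‖ ^ 2) P)
    (hrec : ∀ᵐ ω ∂P, A' ω - B' ω = (A ω - B ω) + Δt • (f (A' ω) - f (B' ω))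
        + ∑ j, ξ₁ ω j • (g (A ω) j - g (B ω) j))
    (hindep : IndepFun ξ₁ (fun ω => (A ω, B ω)) P)
    (hmean : ∫ ω, ξ₁ ω ∂P = 0)
    (hcov : ∀ a b : Fin m, ∫ ω, ξ₁ ω a * ξ₁ ω b ∂P = if a = b then Δt else 0) :
    ∫ ω, ‖A' ω - B' ω‖ ^ 2 ∂P
      ≤ (1 + K₄ * Δt) / (1 - 2 * K₃ * Δt) * ∫ ω, ‖A ω - B ω‖ ^ 2 ∂P := by
  have hc : (0:ℝ) < 1 - 2 * K₃ * Δt := by nlinarith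
  set Z : Ω → EuclideanSpace ℝ (Fin d) := fun ω => A ω - B ω with hZdef
  set Z' : Ω → EuclideanSpace ℝ (Fin d) := fun ω => A' ω - B' ω with hZ'def
  set Dg : Ω → Fin m → EuclideanSpace ℝ (Fin d) :=
    fun ω j => g (A ω) j - g (B ω) j with hDgdef
  set G : Ω → EuclideanSpace ℝ (Fin d) := fun ω => ∑ j, ξ₁ ω j • Dg ω j with hGdef
  -- measurability
  have mZ : Measurable Z := hA.sub hB
  have mZ' : Measurable Z' := hA'.sub hB'
  have mξj : ∀ j, Measurable fun ω => ξ₁ ω j :=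
    fun j => (measurable_pi_apply j).comp ((WithLp.measurable_ofLp 2 _).comp hξm)
  have mDg : ∀ j, Measurable fun ω => Dg ω j := fun j =>
    ((measurable_pi_apply j).comp (hgmeas.comp hA)).sub
      ((measurable_pi_apply j).comp (hgmeas.comp hB))
  have mG : Measurable G := by
    apply Finset.measurable_sum
    exact fun j _ => (mξj j).smul (mDg j)
  -- basic integrability
  have hsq_sub : ∀ (F₁ F₂ : Ω → EuclideanSpace ℝ (Fin d)), Measurable F₁ → Measurable F₂ →
      Integrable (fun ω => ‖F₁ ω‖ ^ 2) P → Integrable (fun ω => ‖F₂ ω‖ ^ 2) P →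
      Integrable (fun ω => ‖F₁ ω - F₂ ω‖ ^ 2) P := by
    intro F₁ F₂ m1 m2 i1 i2
    refine ((i1.add i2).const_mul 2).mono' ?_ ?_
    · exact ((m1.sub m2).norm.pow_const 2).aestronglyMeasurable
    · filter_upwards with ω
      have h := norm_sub_le (F₁ ω) (F₂ ω)
      simp only [Pi.add_apply]
      rw [Real.norm_eq_abs, abs_of_nonneg (sq_nonneg _)]
      nlinarith [mul_self_le_mul_self (norm_nonneg (F₁ ω - F₂ ω)) h, sq_nonneg (‖F₁ ω‖ - ‖F₂ ω‖)]
  have hZ2 : Integrable (fun ω => ‖Z ω‖ ^ 2) P := hsq_sub A B hA hB hA2 hB2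
  have hZ'2 : Integrable (fun ω => ‖Z' ω‖ ^ 2) P := hsq_sub A' B' hA' hB' hA'2 hB'2
  have hDgsum2 : Integrable (fun ω => ∑ j, ‖Dg ω j‖ ^ 2) P := by
    refine (hZ2.const_mul K₄).mono' ?_ ?_
    · exact (Finset.measurable_sum _ fun j _ => (mDg j).norm.pow_const 2).aestronglyMeasurable
    · filter_upwards with ω
      rw [Real.norm_eq_abs, abs_of_nonneg (Finset.sum_nonneg fun j _ => sq_nonneg _)]
      exact hg (A ω) (B ω)
  have hDg2 : ∀ j, Integrable (fun ω => ‖Dg ω j‖ ^ 2) P := by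
    intro j
    refine hDgsum2.mono' ((mDg j).norm.pow_const 2).aestronglyMeasurable ?_
    filter_upwards with ω
    rw [Real.norm_eq_abs, abs_of_nonneg (sq_nonneg _)]
    exact Finset.single_le_sum (f := fun j => ‖Dg ω j‖^2)
      (fun i _ => sq_nonneg _) (Finset.mem_univ j)
  have hξj2 : ∀ j, Integrable (fun ω => (ξ₁ ω j) ^ 2) P := by
    intro j
    refine hξ2.mono' (((mξj j).pow_const 2).aestronglyMeasurable) ?_
    filter_upwards with ω
    rw [Real.norm_eq_abs, abs_of_nonneg (sq_nonneg _)]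
    exact sq_coord_le (ξ₁ ω) j
  have hξjint : ∀ j, Integrable (fun ω => ξ₁ ω j) P := by
    intro j
    refine integrable_of_sq_int (mξj j).aestronglyMeasurable ?_
    simpa [Real.norm_eq_abs, sq_abs] using hξj2 j
  have hξint : Integrable ξ₁ P :=
    integrable_of_sq_int hξm.aestronglyMeasurable hξ2
  have hZDgj : ∀ j, Integrable (fun ω => ⟪Z ω, Dg ω j⟫) P := by
    intro j
    refine (hZ2.add (hDg2 j)).mono' ((mZ.inner (mDg j)).aestronglyMeasurable) ?_
    filter_upwards with ω
    simp only [Pi.add_apply]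
    rw [Real.norm_eq_abs]
    have h1 := abs_real_inner_le_norm (Z ω) (Dg ω j)
    nlinarith [norm_nonneg (Z ω), norm_nonneg (Dg ω j), sq_nonneg (‖Z ω‖ - ‖Dg ω j‖)]
  have hDgab : ∀ a b : Fin m, Integrable (fun ω => ⟪Dg ω a, Dg ω b⟫) P := by
    intro a b
    refine ((hDg2 a).add (hDg2 b)).mono' (((mDg a).inner (mDg b)).aestronglyMeasurable) ?_
    filter_upwards with ω
    simp only [Pi.add_apply]
    rw [Real.norm_eq_abs]
    have h1 := abs_real_inner_le_norm (Dg ω a) (Dg ω b)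
    nlinarith [norm_nonneg (Dg ω a), norm_nonneg (Dg ω b), sq_nonneg (‖Dg ω a‖ - ‖Dg ω b‖)]
  have hξab : ∀ a b : Fin m, Integrable (fun ω => ξ₁ ω a * ξ₁ ω b) P := by
    intro a b
    refine ((hξj2 a).add (hξj2 b)).mono' ((mξj a).mul (mξj b)).aestronglyMeasurable ?_
    filter_upwards with ω
    simp only [Pi.add_apply]
    rw [Real.norm_eq_abs, abs_mul]
    nlinarith [sq_abs (ξ₁ ω a), sq_abs (ξ₁ ω b), sq_nonneg (|ξ₁ ω a| - |ξ₁ ω b|),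
      abs_nonneg (ξ₁ ω a), abs_nonneg (ξ₁ ω b)]
  -- independence of coordinate functions vs functions of (A, B)
  have hindZ : ∀ (φ : EuclideanSpace ℝ (Fin m) → ℝ)
      (ψ : EuclideanSpace ℝ (Fin d) × EuclideanSpace ℝ (Fin d) → ℝ),
      Measurable φ → Measurable ψ →
      IndepFun (fun ω => φ (ξ₁ ω)) (fun ω => ψ (A ω, B ω)) P := by
    intro φ ψ hφ hψ
    exact hindep.comp hφ hψ
  -- coordinatewise mean zero
  have hmeanj : ∀ j, ∫ ω, ξ₁ ω j ∂P = 0 := by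
    intro j
    have h := (EuclideanSpace.proj j (𝕜 := ℝ)
      (ι := Fin m)).integral_comp_comm hξint
    simpa [hmean] using h
  -- independence of the relevant real-valued functionals
  have hindZj : ∀ j, IndepFun (fun ω => ξ₁ ω j) (fun ω => ⟪Z ω, Dg ω j⟫) P := by
    intro j
    have hφ : Measurable fun v : EuclideanSpace ℝ (Fin m) => v j := (measurable_pi_apply j).comp (WithLp.measurable_ofLp 2 _)
    have hψ : Measurable fun p : EuclideanSpace ℝ (Fin d) × EuclideanSpace ℝ (Fin d) =>
        ⟪p.1 - p.2, g p.1 j - g p.2 j⟫ :=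
      (measurable_fst.sub measurable_snd).inner
        (((measurable_pi_apply j).comp (hgmeas.comp measurable_fst)).sub
         ((measurable_pi_apply j).comp (hgmeas.comp measurable_snd)))
    exact hindZ _ _ hφ hψ
  have hindab : ∀ a b : Fin m,
      IndepFun (fun ω => ξ₁ ω a * ξ₁ ω b) (fun ω => ⟪Dg ω a, Dg ω b⟫) P := by
    intro a b
    have hφ : Measurable fun v : EuclideanSpace ℝ (Fin m) => v a * v b :=
      ((measurable_pi_apply a).comp (WithLp.measurable_ofLp 2 _)).mul
        ((measurable_pi_apply b).comp (WithLp.measurable_ofLp 2 _))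
    have hψ : Measurable fun p : EuclideanSpace ℝ (Fin d) × EuclideanSpace ℝ (Fin d) =>
        ⟪g p.1 a - g p.2 a, g p.1 b - g p.2 b⟫ :=
      (((measurable_pi_apply a).comp (hgmeas.comp measurable_fst)).sub
         ((measurable_pi_apply a).comp (hgmeas.comp measurable_snd))).inner
        (((measurable_pi_apply b).comp (hgmeas.comp measurable_fst)).sub
         ((measurable_pi_apply b).comp (hgmeas.comp measurable_snd)))
    exact hindZ _ _ hφ hψ
  have hterm_int : ∀ j, Integrable (fun ω => ξ₁ ω j * ⟪Z ω, Dg ω j⟫) P :=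
    fun j => (hindZj j).integrable_mul (hξjint j) (hZDgj j)
  have hterm2_int : ∀ a b : Fin m,
      Integrable (fun ω => (ξ₁ ω a * ξ₁ ω b) * ⟪Dg ω a, Dg ω b⟫) P :=
    fun a b => (hindab a b).integrable_mul (hξab a b) (hDgab a b)
  -- expansion of the cross term
  have hZGpt : ∀ ω, ⟪Z ω, G ω⟫ = ∑ j, ξ₁ ω j * ⟪Z ω, Dg ω j⟫ := by
    intro ω
    simp only [hGdef, inner_sum, real_inner_smul_right]
  have hZG_int : Integrable (fun ω => ⟪Z ω, G ω⟫) P := by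
    have : (fun ω => ⟪Z ω, G ω⟫) = fun ω => ∑ j, ξ₁ ω j * ⟪Z ω, Dg ω j⟫ := funext hZGpt
    rw [this]
    exact integrable_finset_sum _ fun j _ => hterm_int j
  have hZGzero : ∫ ω, ⟪Z ω, G ω⟫ ∂P = 0 := by
    calc ∫ ω, ⟪Z ω, G ω⟫ ∂P = ∫ ω, ∑ j, ξ₁ ω j * ⟪Z ω, Dg ω j⟫ ∂P := by
          congr 1; exact funext hZGpt
      _ = ∑ j, ∫ ω, ξ₁ ω j * ⟪Z ω, Dg ω j⟫ ∂P :=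
          integral_finset_sum _ fun j _ => hterm_int j
      _ = ∑ j, (∫ ω, ξ₁ ω j ∂P) * ∫ ω, ⟪Z ω, Dg ω j⟫ ∂P :=
          Finset.sum_congr rfl fun j _ =>
            (hindZj j).integral_fun_mul_eq_mul_integral (hξjint j).aestronglyMeasurable (hZDgj j).aestronglyMeasurable
      _ = 0 := by simp [hmeanj]
  -- expansion of ‖G‖²
  have hGpt : ∀ ω, ‖G ω‖ ^ 2 = ∑ a, ∑ b, (ξ₁ ω a * ξ₁ ω b) * ⟪Dg ω a, Dg ω b⟫ := by
    intro ω
    rw [← real_inner_self_eq_norm_sq]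
    simp only [hGdef, sum_inner, inner_sum, real_inner_smul_left, real_inner_smul_right]
    exact Finset.sum_congr rfl fun a _ => Finset.sum_congr rfl fun b _ => by rw [real_inner_comm (Dg ω b)]; ring
  have hG2int : Integrable (fun ω => ‖G ω‖ ^ 2) P := by
    have : (fun ω => ‖G ω‖ ^ 2)
        = fun ω => ∑ a, ∑ b, (ξ₁ ω a * ξ₁ ω b) * ⟪Dg ω a, Dg ω b⟫ := funext hGpt
    rw [this]
    exact integrable_finset_sum _ fun a _ =>
      integrable_finset_sum _ fun b _ => hterm2_int a b
  have hGsq : ∫ ω, ‖G ω‖ ^ 2 ∂P = Δt * ∫ ω, (∑ j, ‖Dg ω j‖ ^ 2) ∂P := by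
    calc ∫ ω, ‖G ω‖ ^ 2 ∂P
        = ∫ ω, ∑ a, ∑ b, (ξ₁ ω a * ξ₁ ω b) * ⟪Dg ω a, Dg ω b⟫ ∂P := by
          congr 1; exact funext hGpt
      _ = ∑ a, ∑ b, ∫ ω, (ξ₁ ω a * ξ₁ ω b) * ⟪Dg ω a, Dg ω b⟫ ∂P := by
          rw [integral_finset_sum _ fun a _ =>
            integrable_finset_sum _ fun b _ => hterm2_int a b]
          exact Finset.sum_congr rfl fun a _ =>
            integral_finset_sum _ fun b _ => hterm2_int a b
      _ = ∑ a, ∑ b, (if a = b then Δt else 0) * ∫ ω, ⟪Dg ω a, Dg ω b⟫ ∂P := by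
          refine Finset.sum_congr rfl fun a _ => Finset.sum_congr rfl fun b _ => ?_
          rw [← hcov a b]
          exact (hindab a b).integral_fun_mul_eq_mul_integral (hξab a b).aestronglyMeasurable (hDgab a b).aestronglyMeasurable
      _ = ∑ a, Δt * ∫ ω, ⟪Dg ω a, Dg ω a⟫ ∂P := by
          refine Finset.sum_congr rfl fun a _ => ?_
          simp only [ite_mul, zero_mul]
          rw [Finset.sum_ite_eq]
          simp
      _ = Δt * ∫ ω, (∑ j, ‖Dg ω j‖ ^ 2) ∂P := by
          rw [← Finset.mul_sum]
          congr 1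
          rw [integral_finset_sum _ fun j _ => hDg2 j]
          exact Finset.sum_congr rfl fun a _ => by
            congr 1; funext ω; rw [real_inner_self_eq_norm_sq]
  -- pointwise contraction inequality
  have hpt : ∀ᵐ ω ∂P, (1 - 2 * K₃ * Δt) * ‖Z' ω‖ ^ 2 ≤ ‖Z ω + G ω‖ ^ 2 := by
    filter_upwards [hrec] with ω hω
    have hZG : Z ω + G ω = Z' ω - Δt • (f (A' ω) - f (B' ω)) := by
      show (A ω - B ω) + (∑ j, ξ₁ ω j • (g (A ω) j - g (B ω) j))
        = (A' ω - B' ω) - Δt • (f (A' ω) - f (B' ω))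
      rw [hω]; abel
    have hexp2 : ‖Z ω + G ω‖ ^ 2
        = ‖Z' ω‖ ^ 2 - 2 * (Δt * ⟪Z' ω, f (A' ω) - f (B' ω)⟫)
          + ‖Δt • (f (A' ω) - f (B' ω))‖ ^ 2 := by
      rw [hZG, norm_sub_sq_real, real_inner_smul_right]
    rw [hexp2]
    have h1 : ⟪Z' ω, f (A' ω) - f (B' ω)⟫ ≤ K₃ * ‖Z' ω‖ ^ 2 := hf (A' ω) (B' ω)
    nlinarith [sq_nonneg ‖Δt • (f (A' ω) - f (B' ω))‖,
      mul_le_mul_of_nonneg_left h1 hΔt0.le]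
  -- integrate
  have hexp : (fun ω => ‖Z ω + G ω‖ ^ 2)
      = fun ω => ‖Z ω‖ ^ 2 + 2 * ⟪Z ω, G ω⟫ + ‖G ω‖ ^ 2 :=
    funext fun ω => norm_add_sq_real _ _
  have i2' : Integrable (fun ω => 2 * ⟪Z ω, G ω⟫) P := hZG_int.const_mul 2
  have i12 : Integrable (fun ω => ‖Z ω‖ ^ 2 + 2 * ⟪Z ω, G ω⟫) P := hZ2.add i2'
  have hZpG2 : Integrable (fun ω => ‖Z ω + G ω‖ ^ 2) P := by
    rw [hexp]; exact i12.add hG2int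
  have key : (1 - 2 * K₃ * Δt) * ∫ ω, ‖Z' ω‖ ^ 2 ∂P ≤ ∫ ω, ‖Z ω + G ω‖ ^ 2 ∂P := by
    rw [← integral_const_mul]
    exact integral_mono_ae (hZ'2.const_mul _) hZpG2 hpt
  have hsum : ∫ ω, ‖Z ω + G ω‖ ^ 2 ∂P
      = ∫ ω, ‖Z ω‖ ^ 2 ∂P + 2 * ∫ ω, ⟪Z ω, G ω⟫ ∂P + ∫ ω, ‖G ω‖ ^ 2 ∂P := by
    rw [hexp, integral_add i12 hG2int, integral_add hZ2 i2', integral_const_mul]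
  have hDgle : ∫ ω, (∑ j, ‖Dg ω j‖ ^ 2) ∂P ≤ K₄ * ∫ ω, ‖Z ω‖ ^ 2 ∂P := by
    rw [← integral_const_mul]
    exact integral_mono hDgsum2 (hZ2.const_mul K₄) fun ω => hg (A ω) (B ω)
  have hZnn : 0 ≤ ∫ ω, ‖Z ω‖ ^ 2 ∂P := integral_nonneg fun ω => sq_nonneg _
  have final : (1 - 2 * K₃ * Δt) * ∫ ω, ‖Z' ω‖ ^ 2 ∂P
      ≤ (1 + K₄ * Δt) * ∫ ω, ‖Z ω‖ ^ 2 ∂P := by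
    rw [hsum, hZGzero, hGsq] at key
    nlinarith [mul_le_mul_of_nonneg_left hDgle hΔt0.le]
  rw [div_mul_eq_mul_div, le_div_iff₀ hc]
  linarith

/-- Lemma 4.2: mean-square contraction of two semi-implicit Euler–Maruyama solutions
started from different initial values `x` and `y` and driven by the same Brownian
increments `ξ_{i+1}` and the same Lévy increments `η_{i+1}`.  With
`Q₃ = (1 + K₄Δt)/(1 − 2K₃Δt)` one has `Q₃ < 1`,
`E‖X_i^x − X_i^y‖² ≤ Q₃^i ‖x − y‖²`, and `E‖X_i^x − X_i^y‖² → 0` as `i → ∞`.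
A `d × m` matrix is represented by its columns `g x : Fin m → ℝ^d`; its Frobenius norm
squared is `∑ j, ‖g x j‖²` and the matrix-vector product is `∑ j, ξ_j • (column j)`. -/
theorem semi_implicit_EM_mean_square_contraction
    (Ω : Type*) [MeasurableSpace Ω] (P : Measure Ω) [IsProbabilityMeasure P]
    (d m : ℕ) (hd : 1 ≤ d) (hm : 1 ≤ m)
    (Δt K₃ K₄ : ℝ) (hΔt : Δt ∈ Set.Ioo (0:ℝ) 1)
    (hK₃ : K₃ < -(1 / 2)) (hK₄ : 0 < K₄) (hK₃₄ : K₄ + 2 * K₃ < -1)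
    (f : EuclideanSpace ℝ (Fin d) → EuclideanSpace ℝ (Fin d))
    (hf : ∀ u v : EuclideanSpace ℝ (Fin d), ⟪u - v, f u - f v⟫ ≤ K₃ * ‖u - v‖ ^ 2)
    (g : EuclideanSpace ℝ (Fin d) → Fin m → EuclideanSpace ℝ (Fin d))
    (hgmeas : Measurable g)
    (hg : ∀ u v : EuclideanSpace ℝ (Fin d),
      (∑ j, ‖g u j - g v j‖ ^ 2) ≤ K₄ * ‖u - v‖ ^ 2)
    (x y : EuclideanSpace ℝ (Fin d))
    (Xx Xy η : ℕ → Ω → EuclideanSpace ℝ (Fin d)) (ξ : ℕ → Ω → EuclideanSpace ℝ (Fin m))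
    (hXxmeas : ∀ i, Measurable (Xx i)) (hXymeas : ∀ i, Measurable (Xy i))
    (hξmeas : ∀ i, Measurable (ξ i)) (hηmeas : ∀ i, Measurable (η i))
    (hXx2 : ∀ i, Integrable (fun ω => ‖Xx i ω‖ ^ 2) P)
    (hXy2 : ∀ i, Integrable (fun ω => ‖Xy i ω‖ ^ 2) P)
    (hξ2 : ∀ i, Integrable (fun ω => ‖ξ i ω‖ ^ 2) P)
    (hη2 : ∀ i, Integrable (fun ω => ‖η i ω‖ ^ 2) P)
    (hX0x : ∀ ω, Xx 0 ω = x) (hX0y : ∀ ω, Xy 0 ω = y)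
    (hrecx : ∀ i : ℕ, ∀ᵐ ω ∂P,
      Xx (i + 1) ω = Xx i ω + Δt • f (Xx (i + 1) ω)
        + (∑ j, ξ (i + 1) ω j • g (Xx i ω) j) + η (i + 1) ω)
    (hrecy : ∀ i : ℕ, ∀ᵐ ω ∂P,
      Xy (i + 1) ω = Xy i ω + Δt • f (Xy (i + 1) ω)
        + (∑ j, ξ (i + 1) ω j • g (Xy i ω) j) + η (i + 1) ω)
    (hindep : ∀ i : ℕ, IndepFun (ξ (i + 1)) (fun ω => (Xx i ω, Xy i ω)) P)
    (hξmean : ∀ i : ℕ, ∫ ω, ξ (i + 1) ω ∂P = 0)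
    (hξcov : ∀ i : ℕ, ∀ a b : Fin m,
      ∫ ω, ξ (i + 1) ω a * ξ (i + 1) ω b ∂P = if a = b then Δt else 0) :
    (1 + K₄ * Δt) / (1 - 2 * K₃ * Δt) < 1 ∧
    (∀ i : ℕ, ∫ ω, ‖Xx i ω - Xy i ω‖ ^ 2 ∂P
      ≤ ((1 + K₄ * Δt) / (1 - 2 * K₃ * Δt)) ^ i * ‖x - y‖ ^ 2) ∧
    Tendsto (fun i : ℕ => ∫ ω, ‖Xx i ω - Xy i ω‖ ^ 2 ∂P) atTop (𝓝 0) := by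
  obtain ⟨hΔt0, hΔt1⟩ := hΔt
  have hK₃0 : K₃ < 0 := by linarith
  have hc : (0:ℝ) < 1 - 2 * K₃ * Δt := by nlinarith
  set Q : ℝ := (1 + K₄ * Δt) / (1 - 2 * K₃ * Δt) with hQdef
  have hQlt : Q < 1 := by
    rw [hQdef, div_lt_one hc]; nlinarith
  have hQ0 : 0 ≤ Q := by
    apply div_nonneg _ hc.le; nlinarith
  have hstep : ∀ i, ∫ ω, ‖Xx (i+1) ω - Xy (i+1) ω‖ ^ 2 ∂P
      ≤ Q * ∫ ω, ‖Xx i ω - Xy i ω‖ ^ 2 ∂P := by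
    intro i
    refine contraction_step hΔt0 hK₃0 hK₄ hf hgmeas hg (hXxmeas i) (hXymeas i)
      (hXxmeas (i+1)) (hXymeas (i+1)) (hξmeas (i+1)) (hXx2 i) (hXy2 i)
      (hXx2 (i+1)) (hXy2 (i+1)) (hξ2 (i+1)) ?_ (hindep i) (hξmean i) (hξcov i)
    filter_upwards [hrecx i, hrecy i] with ω h1 h2
    conv_lhs => rw [h1, h2]
    simp only [smul_sub, Finset.sum_sub_distrib]
    abel
  have hbase : ∫ ω, ‖Xx 0 ω - Xy 0 ω‖ ^ 2 ∂P = ‖x - y‖ ^ 2 := by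
    simp only [hX0x, hX0y]
    simp
  have hmain : ∀ i, ∫ ω, ‖Xx i ω - Xy i ω‖ ^ 2 ∂P ≤ Q ^ i * ‖x - y‖ ^ 2 := by
    intro i
    induction i with
    | zero => simp [hbase]
    | succ n ih =>
      calc ∫ ω, ‖Xx (n+1) ω - Xy (n+1) ω‖ ^ 2 ∂P
          ≤ Q * ∫ ω, ‖Xx n ω - Xy n ω‖ ^ 2 ∂P := hstep n
        _ ≤ Q * (Q ^ n * ‖x - y‖ ^ 2) := mul_le_mul_of_nonneg_left ih hQ0
        _ = Q ^ (n+1) * ‖x - y‖ ^ 2 := by ring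
  refine ⟨hQlt, hmain, ?_⟩
  have h0 : Tendsto (fun i : ℕ => Q ^ i * ‖x - y‖ ^ 2) atTop (𝓝 0) := by
    have h := tendsto_pow_atTop_nhds_zero_of_lt_one hQ0 hQlt
    simpa using h.mul_const (‖x - y‖ ^ 2)
  exact squeeze_zero (fun i => integral_nonneg fun ω => sq_nonneg _) hmain h0
end
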